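/- arXiv:alg-geom/9408007 — 3 statements merged into one kernel-verified Lean document; each statement's English description precedes it below -/
import Mathlib

section
/- (Tacnodes of C tangent to Q.) For each i ∈ {2,3,4,5}, write p_i = [u_i : v_i : w_i] with the listed coordinates (each has w_i ≠ 0), and set f(u,v) = F(u,v,1), q(u,v) = Q(u,v,1) and (a_i, b_i) = (u_i/w_i, v_i/w_i). Then: f(a_i,b_i) = 0; both first partial derivatives of f vanish at (a_i,b_i); the gradient of q at (a_i,b_i) is nonzero; and the degree-2 Taylor term of f at (a_i,b_i) is a nonzero scalar multiple of the square of the linear form (∂q/∂u)(a_i,b_i)·(u − a_i) + (∂q/∂v)(a_i,b_i)·(v − b_i). In other words, the octic curve {F = 0} has a double point at each of p2, p3, p4, p5 whose tangent cone is the doubled tangent line of the conic {Q = 0} at that point. -/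
noncomputable section

open MvPolynomial

/-- The polynomial ring `ℂ[x,y,z]`. -/
abbrev R3 : Type := MvPolynomial (Fin 3) ℂ

/-- `α = √17`. -/
def α : ℂ := Real.sqrt 17
/-- `β = √(21 + 5√17)`. -/
def β : ℂ := Real.sqrt (21 + 5 * Real.sqrt 17)
/-- `δ = √(5 + √17)`. -/
def δ : ℂ := Real.sqrt (5 + Real.sqrt 17)

def x : R3 := X 0
def y : R3 := X 1
def z : R3 := X 2

def A1 : R3 :=
  14408408592*x^4*y^2*z + 50076004923*x^4*z^3 + 14182182144*x^3*y^4
  + 219953469600*x^3*y^2*z^2 - 363210576777*x^3*z^4 - 1093337332608*x^2*y^2*z^3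
  + 831133690121*x^2*z^5 + 858975454416*x*y^2*z^4 - 772939669603*x*z^6
  + 254940551336*z^7

def A2 : R3 :=
  -72389196288*x^4*y^4 - 3335393797632*x^4*y^2*z^2 - 1065820046526*x^4*z^4
  - 8342111361024*x^3*y^4*z + 3945428471808*x^3*y^2*z^3 + 10184161263912*x^3*z^5
  + 20168534212608*x^2*y^4*z^2 + 53110876008192*x^2*y^2*z^4 - 32270723397636*x^2*z^6
  - 100932292129536*x*y^2*z^5 + 38252243189640*x*z^7 + 47211381447168*y^2*z^6
  - 15099861009390*z^8

def A3 : R3 :=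
  15490159728*x^4*y^2*z + 53840161671*x^4*z^3 + 15251365120*x^3*y^4
  + 236488232416*x^3*y^2*z^2 - 390512591333*x^3*z^4 - 1175521621376*x^2*y^2*z^3
  + 893608694925*x^2*z^5 + 923543229232*x*y^2*z^4 - 831040262535*x*z^6
  + 274103997272*z^7

def A4 : R3 :=
  59398585488*x^4*y^2*z + 206468708787*x^4*z^3 + 58496365824*x^3*y^4
  + 906899335584*x^3*y^2*z^2 - 1497555836337*x^3*z^4 - 4507944789888*x^2*y^2*z^3
  + 3426852351793*x^2*z^5 + 3541646868816*x*y^2*z^4 - 3186912029723*x*z^6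
  + 1051146805480*z^7

def A5 : R3 :=
  -466877917440*x^4*y^4 - 21516582641184*x^4*y^2*z^2 - 6875617032333*x^4*z^4
  - 53815549731840*x^3*y^4*z + 25451977456512*x^3*y^2*z^3 + 65698123816692*x^3*z^5
  + 130107481479168*x^2*y^4*z^2 + 342618718898784*x^2*y^2*z^4 - 208178748305934*x^2*z^6
  - 651115201689280*x*y^2*z^5 + 246765593291124*x*z^7 + 304561087975168*y^2*z^6
  - 97409351769549*z^8

def A6 : R3 :=
  -298344909312*x^4*y^4 - 13752106145280*x^4*y^2*z^2 - 4394491299054*x^4*z^4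
  - 34395989170176*x^3*y^4*z + 16267404201984*x^3*y^2*z^3 + 41990375439720*x^3*z^5
  + 83157067186176*x^2*y^4*z^2 + 218981688444672*x^2*y^2*z^4 - 133055599121316*x^2*z^6
  - 416154499902208*x*y^2*z^5 + 157718037119688*x*z^7 + 194657513400832*y^2*z^6
  - 62258322139038*z^8

def A7 : R3 :=
  191605550544*x^4*y^2*z + 665965983645*x^4*z^3 + 188641373952*x^3*y^4
  + 2925195141792*x^3*y^2*z^2 - 4830373865031*x^3*z^4 - 14540399432832*x^2*y^2*z^3
  + 11053328983807*x^2*z^5 + 11423598740496*x*y^2*z^4 - 10279400307101*x*z^6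
  + 3390479204680*z^7

def A8 : R3 :=
  -1925078503680*x^4*y^4 - 88715185482528*x^4*y^2*z^2 - 28348893570645*x^4*z^4
  - 221886790124544*x^3*y^4*z + 104941198124928*x^3*y^2*z^3 + 270880301999124*x^3*z^5
  + 536446841591808*x^2*y^4*z^2 + 1412653204386144*x^2*y^2*z^4 - 858342969385662*x^2*z^6
  - 2684616751584448*x*y^2*z^5 + 1017440607056532*x*z^7 + 1255737534555904*y^2*z^6
  - 401629046099349*z^8

/-- Werner's homogeneous octic `F`. -/
def F : R3 :=
  C (24*α*β*δ) * y * A1 + C (α*β) * A2 + C (144*α*δ) * y * A3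
  + C (24*β*δ) * y * A4 + C α * A5 + C β * A6 + C (48*δ) * y * A7 + A8

/-- The conic `Q`. -/
def Qpoly : R3 :=
  C (9*α*β+90*α+81*β+234) * x^2 + C (176*α*β+1568*α+1200*β+5920) * y^2
  + C (57*α*β+258*α+129*β+1170) * z^2 - C (48*α*β*δ+168*α*δ+48*β*δ+936*δ) * x * y
  - C (66*α*β+348*α+210*β+1404) * x * z + C (48*α*β*δ+168*α*δ+48*β*δ+936*δ) * y * z

/-- Coordinate representative of `p = [1:0:0]`. -/
def ptP : Fin 3 → ℂ := ![1, 0, 0]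
/-- Coordinate representative of `p1 = [0:1:0]`. -/
def ptP1 : Fin 3 → ℂ := ![0, 1, 0]
/-- Coordinate representative of `p2 = [10+4α+4β : 3δ : 6]`. -/
def ptP2 : Fin 3 → ℂ := ![10+4*α+4*β, 3*δ, 6]
/-- Coordinate representative of `p3 = [1:0:1]`. -/
def ptP3 : Fin 3 → ℂ := ![1, 0, 1]
/-- Coordinate representative of `p4 = [16+4α+4β : 3δ+6 : 12]`. -/
def ptP4 : Fin 3 → ℂ := ![16+4*α+4*β, 3*δ+6, 12]
/-- Coordinate representative of `p5 = [16+4α+4β : 3δ−6 : 12]`. -/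
def ptP5 : Fin 3 → ℂ := ![16+4*α+4*β, 3*δ-6, 12]

/-- The affine curve `f(u,v) = F(u,v,1)` has a double point at `(a,b)` whose tangent
cone (the degree-2 Taylor term of `f` at `(a,b)`) is a nonzero multiple of the square
of the linear form `q_u·(u−a) + q_v·(v−b)`, where `q(u,v) = Q(u,v,1)` and
`(q_u, q_v)` is the (nonzero) gradient of `q` at `(a,b)`. -/
def TacnodeTangentToQAt (a b : ℂ) : Prop :=
  eval ![a, b, 1] F = 0 ∧
  eval ![a, b, 1] (pderiv 0 F) = 0 ∧
  eval ![a, b, 1] (pderiv 1 F) = 0 ∧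
  ¬ (eval ![a, b, 1] (pderiv 0 Qpoly) = 0 ∧ eval ![a, b, 1] (pderiv 1 Qpoly) = 0) ∧
  ∃ c : ℂ, c ≠ 0 ∧
    eval ![a, b, 1] (pderiv 0 (pderiv 0 F))
      = 2 * c * (eval ![a, b, 1] (pderiv 0 Qpoly))^2 ∧
    eval ![a, b, 1] (pderiv 1 (pderiv 0 F))
      = 2 * c * (eval ![a, b, 1] (pderiv 0 Qpoly)) * (eval ![a, b, 1] (pderiv 1 Qpoly)) ∧
    eval ![a, b, 1] (pderiv 1 (pderiv 1 F))
      = 2 * c * (eval ![a, b, 1] (pderiv 1 Qpoly))^2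

lemma hA : α^2 = 17 := by
  rw [α]; norm_cast; exact_mod_cast Real.sq_sqrt (by norm_num)
lemma hB : β^2 = 21 + 5*α := by
  rw [β, α]; norm_cast; exact_mod_cast Real.sq_sqrt (by positivity)
lemma hD : δ^2 = 5 + α := by
  rw [δ, α]; norm_cast; exact_mod_cast Real.sq_sqrt (by positivity)

lemma pd_num (i : Fin 3) (n : ℕ) [n.AtLeastTwo] :
    pderiv i (OfNat.ofNat n : R3) = 0 := by
  have h : ((OfNat.ofNat n : ℕ) : R3) = OfNat.ofNat n := Nat.cast_ofNat
  rw [← h, Derivation.map_natCast]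

lemma pdn2 (i : Fin 3) : pderiv i (2:R3) = 0 := pd_num i 2
lemma pdn3 (i : Fin 3) : pderiv i (3:R3) = 0 := pd_num i 3
lemma pdn4 (i : Fin 3) : pderiv i (4:R3) = 0 := pd_num i 4
lemma pdn5 (i : Fin 3) : pderiv i (5:R3) = 0 := pd_num i 5
lemma pdn6 (i : Fin 3) : pderiv i (6:R3) = 0 := pd_num i 6
lemma pdn7 (i : Fin 3) : pderiv i (7:R3) = 0 := pd_num i 7
lemma pdn8 (i : Fin 3) : pderiv i (8:R3) = 0 := pd_num i 8

lemma pd00 : pderiv (0:Fin 3) (X 0 : R3) = 1 := pderiv_X_self _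
lemma pd01 : pderiv (0:Fin 3) (X 1 : R3) = 0 := pderiv_X_of_ne (by decide)
lemma pd02 : pderiv (0:Fin 3) (X 2 : R3) = 0 := pderiv_X_of_ne (by decide)
lemma pd10 : pderiv (1:Fin 3) (X 0 : R3) = 0 := pderiv_X_of_ne (by decide)
lemma pd11 : pderiv (1:Fin 3) (X 1 : R3) = 1 := pderiv_X_self _
lemma pd12 : pderiv (1:Fin 3) (X 2 : R3) = 0 := pderiv_X_of_ne (by decide)


lemma Cnum (n : ℕ) [n.AtLeastTwo] :
    (OfNat.ofNat n : R3) = C (OfNat.ofNat n : ℂ) := (map_ofNat C n).symm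

lemma A1C : A1 =
  C 14408408592*x^4*y^2*z + C 50076004923*x^4*z^3 + C 14182182144*x^3*y^4
  + C 219953469600*x^3*y^2*z^2 - C 363210576777*x^3*z^4 - C 1093337332608*x^2*y^2*z^3
  + C 831133690121*x^2*z^5 + C 858975454416*x*y^2*z^4 - C 772939669603*x*z^6
  + C 254940551336*z^7 := by
  simp only [A1]
  rw [Cnum 1093337332608, Cnum 14182182144, Cnum 14408408592, Cnum 219953469600, Cnum 254940551336, Cnum 363210576777, Cnum 50076004923, Cnum 772939669603, Cnum 831133690121, Cnum 858975454416]
  all_goals ring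

lemma A2C : A2 =
  -C 72389196288*x^4*y^4 - C 3335393797632*x^4*y^2*z^2 - C 1065820046526*x^4*z^4
  - C 8342111361024*x^3*y^4*z + C 3945428471808*x^3*y^2*z^3 + C 10184161263912*x^3*z^5
  + C 20168534212608*x^2*y^4*z^2 + C 53110876008192*x^2*y^2*z^4 - C 32270723397636*x^2*z^6
  - C 100932292129536*x*y^2*z^5 + C 38252243189640*x*z^7 + C 47211381447168*y^2*z^6
  - C 15099861009390*z^8 := by
  simp only [A2]
  rw [Cnum 100932292129536, Cnum 10184161263912, Cnum 1065820046526, Cnum 15099861009390, Cnum 20168534212608, Cnum 32270723397636, Cnum 3335393797632, Cnum 38252243189640, Cnum 3945428471808, Cnum 47211381447168, Cnum 53110876008192, Cnum 72389196288, Cnum 8342111361024]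
  all_goals ring

lemma A3C : A3 =
  C 15490159728*x^4*y^2*z + C 53840161671*x^4*z^3 + C 15251365120*x^3*y^4
  + C 236488232416*x^3*y^2*z^2 - C 390512591333*x^3*z^4 - C 1175521621376*x^2*y^2*z^3
  + C 893608694925*x^2*z^5 + C 923543229232*x*y^2*z^4 - C 831040262535*x*z^6
  + C 274103997272*z^7 := by
  simp only [A3]
  rw [Cnum 1175521621376, Cnum 15251365120, Cnum 15490159728, Cnum 236488232416, Cnum 274103997272, Cnum 390512591333, Cnum 53840161671, Cnum 831040262535, Cnum 893608694925, Cnum 923543229232]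
  all_goals ring

lemma A4C : A4 =
  C 59398585488*x^4*y^2*z + C 206468708787*x^4*z^3 + C 58496365824*x^3*y^4
  + C 906899335584*x^3*y^2*z^2 - C 1497555836337*x^3*z^4 - C 4507944789888*x^2*y^2*z^3
  + C 3426852351793*x^2*z^5 + C 3541646868816*x*y^2*z^4 - C 3186912029723*x*z^6
  + C 1051146805480*z^7 := by
  simp only [A4]
  rw [Cnum 1051146805480, Cnum 1497555836337, Cnum 206468708787, Cnum 3186912029723, Cnum 3426852351793, Cnum 3541646868816, Cnum 4507944789888, Cnum 58496365824, Cnum 59398585488, Cnum 906899335584]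
  all_goals ring

lemma A5C : A5 =
  -C 466877917440*x^4*y^4 - C 21516582641184*x^4*y^2*z^2 - C 6875617032333*x^4*z^4
  - C 53815549731840*x^3*y^4*z + C 25451977456512*x^3*y^2*z^3 + C 65698123816692*x^3*z^5
  + C 130107481479168*x^2*y^4*z^2 + C 342618718898784*x^2*y^2*z^4 - C 208178748305934*x^2*z^6
  - C 651115201689280*x*y^2*z^5 + C 246765593291124*x*z^7 + C 304561087975168*y^2*z^6
  - C 97409351769549*z^8 := by
  simp only [A5]
  rw [Cnum 130107481479168, Cnum 208178748305934, Cnum 21516582641184, Cnum 246765593291124, Cnum 25451977456512, Cnum 304561087975168, Cnum 342618718898784, Cnum 466877917440, Cnum 53815549731840, Cnum 651115201689280, Cnum 65698123816692, Cnum 6875617032333, Cnum 97409351769549]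
  all_goals ring

lemma A6C : A6 =
  -C 298344909312*x^4*y^4 - C 13752106145280*x^4*y^2*z^2 - C 4394491299054*x^4*z^4
  - C 34395989170176*x^3*y^4*z + C 16267404201984*x^3*y^2*z^3 + C 41990375439720*x^3*z^5
  + C 83157067186176*x^2*y^4*z^2 + C 218981688444672*x^2*y^2*z^4 - C 133055599121316*x^2*z^6
  - C 416154499902208*x*y^2*z^5 + C 157718037119688*x*z^7 + C 194657513400832*y^2*z^6
  - C 62258322139038*z^8 := by
  simp only [A6]
  rw [Cnum 133055599121316, Cnum 13752106145280, Cnum 157718037119688, Cnum 16267404201984, Cnum 194657513400832, Cnum 218981688444672, Cnum 298344909312, Cnum 34395989170176, Cnum 416154499902208, Cnum 41990375439720, Cnum 4394491299054, Cnum 62258322139038, Cnum 83157067186176]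
  all_goals ring

lemma A7C : A7 =
  C 191605550544*x^4*y^2*z + C 665965983645*x^4*z^3 + C 188641373952*x^3*y^4
  + C 2925195141792*x^3*y^2*z^2 - C 4830373865031*x^3*z^4 - C 14540399432832*x^2*y^2*z^3
  + C 11053328983807*x^2*z^5 + C 11423598740496*x*y^2*z^4 - C 10279400307101*x*z^6
  + C 3390479204680*z^7 := by
  simp only [A7]
  rw [Cnum 10279400307101, Cnum 11053328983807, Cnum 11423598740496, Cnum 14540399432832, Cnum 188641373952, Cnum 191605550544, Cnum 2925195141792, Cnum 3390479204680, Cnum 4830373865031, Cnum 665965983645]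
  all_goals ring

lemma A8C : A8 =
  -C 1925078503680*x^4*y^4 - C 88715185482528*x^4*y^2*z^2 - C 28348893570645*x^4*z^4
  - C 221886790124544*x^3*y^4*z + C 104941198124928*x^3*y^2*z^3 + C 270880301999124*x^3*z^5
  + C 536446841591808*x^2*y^4*z^2 + C 1412653204386144*x^2*y^2*z^4 - C 858342969385662*x^2*z^6
  - C 2684616751584448*x*y^2*z^5 + C 1017440607056532*x*z^7 + C 1255737534555904*y^2*z^6
  - C 401629046099349*z^8 := by
  simp only [A8]
  rw [Cnum 1017440607056532, Cnum 104941198124928, Cnum 1255737534555904, Cnum 1412653204386144, Cnum 1925078503680, Cnum 221886790124544, Cnum 2684616751584448, Cnum 270880301999124, Cnum 28348893570645, Cnum 401629046099349, Cnum 536446841591808, Cnum 858342969385662, Cnum 88715185482528]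
  all_goals ring

set_option maxHeartbeats 4000000 in
set_option maxRecDepth 16384 in
lemma p0F : eval ![((10+4*α+4*β)/6), ((3*δ)/6), 1] F = 0 := by
  simp [F, A1C, A2C, A3C, A4C, A5C, A6C, A7C, A8C, Qpoly, x, y, z, pderiv_mul, pderiv_pow, pderiv_C, pd00, pd01, pd02, pd10, pd11, pd12, pdn2, pdn3, pdn4, pdn5, pdn6, pdn7, pdn8, Derivation.map_sub, Derivation.map_neg]
  linear_combination ((1254781461318736/3:ℂ) + (113139874408192:ℂ)*β + (2155117992443024/3:ℂ)*α + (423100375179904/3:ℂ)*α*β + (1172125200495472/3:ℂ)*α*α + (203316820844992/3:ℂ)*α*α*β + (275302524606640/3:ℂ)*α*α*α + (39977910226432/3:ℂ)*α*α*α*β + (27926330438656/3:ℂ)*α*α*α*α + (798203835712:ℂ)*α*α*α*α*β + (809441222912/3:ℂ)*α*α*α*α*α + (32388655360/3:ℂ)*α*α*α*α*α*β) * hA + ((-39640180887920:ℂ) + (-93316339469472:ℂ)*δ*δ + (98720078176:ℂ)*δ*δ*δ*δ + (1145522477952:ℂ)*δ*δ*δ*δ*δ*δ + (22975053020128/3:ℂ)*β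 + (-114604981701280/3:ℂ)*β*δ*δ + (7608986536448/3:ℂ)*β*δ*δ*δ*δ + (544003661056/3:ℂ)*β*δ*δ*δ*δ*δ*δ + (-1838665363280:ℂ)*β*β + (-21721695733472/3:ℂ)*β*β*δ*δ + (687650551808:ℂ)*β*β*δ*δ*δ*δ + (38997577216/3:ℂ)*β*β*δ*δ*δ*δ*δ*δ + (-2604142992032/3:ℂ)*β*β*β + (-189709043136:ℂ)*β*β*β*δ*δ + (94547673856/3:ℂ)*β*β*β*δ*δ*δ*δ + (-47057233926592/3:ℂ)*α + (-546062435801408/3:ℂ)*α*δ*δ + (38949930513184/3:ℂ)*α*δ*δ*δ*δ + (2367885820544/3:ℂ)*α*δ*δ*δ*δ*δ*δ + (-13598587855104:ℂ)*α*β + (-33159373396608:ℂ)*α*β*δ*δ + (9117165971456/3:ℂ)*α*β*δ*δ*δ*δ + (248909102848/3:ℂ)*α*β*δ*δ*δ*δ*δ*δ + (-11754394546928/3:ℂ)*α*β*β + (-2514939407776:ℂ)*α*β*β*δ*δ + (878557918208/3:ℂ)*α*β*β*δ*δ*δ*δ + (3151596032:ℂ)*α*β*β*δ*δ*δ*δ*δ*δ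 + (-631597064608/3:ℂ)*α*β*β*β + (-138036379456/3:ℂ)*α*β*β*β*δ*δ + (22933867264/3:ℂ)*α*β*β*β*δ*δ*δ*δ + (-123446567674256/3:ℂ)*α*α + (-203534402438656/3:ℂ)*α*α*δ*δ + (6446467380992:ℂ)*α*α*δ*δ*δ*δ + (163034958336:ℂ)*α*α*δ*δ*δ*δ*δ*δ + (-26870750734496/3:ℂ)*α*α*β + (-6933445144096:ℂ)*α*α*β*δ*δ + (2330993643520/3:ℂ)*α*α*β*δ*δ*δ*δ + (9454788096:ℂ)*α*α*β*δ*δ*δ*δ*δ*δ + (-2526388258432/3:ℂ)*α*α*β*β + (-552145517824/3:ℂ)*α*α*β*β*δ*δ + (91735469056/3:ℂ)*α*α*β*β*δ*δ*δ*δ + (-39285300165280/3:ℂ)*α*α*α + (-23513550148256/3:ℂ)*α*α*α*δ*δ + (927259832064:ℂ)*α*α*α*δ*δ*δ*δ + (9454788096:ℂ)*α*α*α*δ*δ*δ*δ*δ*δ + (-1263194129216:ℂ)*α*α*α*β + (-276072758912:ℂ)*α*α*α*β*δ*δ + (45867734528:ℂ)*α*α*α*β*δ*δ*δ*δ + (-2526388258432/3:ℂ)*α*α*α*α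 + (-552145517824/3:ℂ)*α*α*α*α*δ*δ + (91735469056/3:ℂ)*α*α*α*α*δ*δ*δ*δ) * hB + ((-3733882658739088/3:ℂ) + (118926477883216:ℂ)*δ*δ + (76097944734976/3:ℂ)*δ*δ*δ*δ + (-1200882204345728/3:ℂ)*β + (39131034427840:ℂ)*β*δ*δ + (16749448374976/3:ℂ)*β*δ*δ*δ*δ + (-6211543833245824/3:ℂ)*α + (1129653589208272/3:ℂ)*α*δ*δ + (72577684069504/3:ℂ)*α*δ*δ*δ*δ + (-1043628545585984/3:ℂ)*α*β + (72385967380832:ℂ)*α*β*δ*δ + (13742724964928/3:ℂ)*α*β*δ*δ*δ*δ + (-1921912822001392/3:ℂ)*α*α + (745499695652960/3:ℂ)*α*α*δ*δ + (25140897601408/3:ℂ)*α*α*δ*δ*δ*δ + (-102345970922592:ℂ)*α*α*β + (45415297535776:ℂ)*α*α*β*δ*δ + (3979603673216/3:ℂ)*α*α*β*δ*δ*δ*δ + (50579910172896:ℂ)*α*α*α + (67504318042112:ℂ)*α*α*α*δ*δ + (3750238810624/3:ℂ)*α*α*α*δ*δ*δ*δ + (53243826910144/3:ℂ)*α*α*α*β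 + (30501665476480/3:ℂ)*α*α*α*β*δ*δ + (434746690816/3:ℂ)*α*α*α*β*δ*δ*δ*δ + (158852783211680/3:ℂ)*α*α*α*α + (23483107440128/3:ℂ)*α*α*α*α*δ*δ + (202827281920/3:ℂ)*α*α*α*α*δ*δ*δ*δ + (28895558998240/3:ℂ)*α*α*α*α*β + (736253777664:ℂ)*α*α*α*α*β*δ*δ + (3151596032:ℂ)*α*α*α*α*β*δ*δ*δ*δ + (7959708108032:ℂ)*α*α*α*α*α + (809441222912/3:ℂ)*α*α*α*α*α*δ*δ + (2232668230336/3:ℂ)*α*α*α*α*α*β + (32388655360/3:ℂ)*α*α*α*α*α*β*δ*δ + (809441222912/3:ℂ)*α*α*α*α*α*α + (32388655360/3:ℂ)*α*α*α*α*α*α*β) * hD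

set_option maxHeartbeats 4000000 in
set_option maxRecDepth 16384 in
lemma p0Fx : eval ![((10+4*α+4*β)/6), ((3*δ)/6), 1] (pderiv 0 F) = 0 := by
  simp [F, A1C, A2C, A3C, A4C, A5C, A6C, A7C, A8C, Qpoly, x, y, z, pderiv_mul, pderiv_pow, pderiv_C, pd00, pd01, pd02, pd10, pd11, pd12, pdn2, pdn3, pdn4, pdn5, pdn6, pdn7, pdn8, Derivation.map_sub, Derivation.map_neg]
  linear_combination ((586807135565664:ℂ) + (112203101361264:ℂ)*β + (600936475936448:ℂ)*α + (117616827657056:ℂ)*α*β + (216896305598944:ℂ)*α*α + (35864891301680:ℂ)*α*α*β + (31471777578880:ℂ)*α*α*α + (3072048767744:ℂ)*α*α*α*β + (1217219221504:ℂ)*α*α*α*α + (60049916672:ℂ)*α*α*α*α*β) * hA + ((4682573829600:ℂ) + (-184777877337600:ℂ)*δ*δ + (14281310996992:ℂ)*δ*δ*δ*δ + (669764577024:ℂ)*δ*δ*δ*δ*δ*δ + (-16673666303840:ℂ)*β + (-34418280715216:ℂ)*β*δ*δ + (3399409971072:ℂ)*β*δ*δ*δ*δ + (58496365824:ℂ)*β*δ*δ*δ*δ*δ*δ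 + (-5208285984064:ℂ)*β*β + (-1138254258816:ℂ)*β*β*δ*δ + (189095347712:ℂ)*β*β*δ*δ*δ*δ + (-91851738032128:ℂ)*α + (-126686181900320:ℂ)*α*δ*δ + (12428157961472:ℂ)*α*δ*δ*δ*δ + (279411833088:ℂ)*α*δ*δ*δ*δ*δ*δ + (-19668811681824:ℂ)*α*β + (-11762458155728:ℂ)*α*β*δ*δ + (1391805175168:ℂ)*α*β*δ*δ*δ*δ + (14182182144:ℂ)*α*β*δ*δ*δ*δ*δ*δ + (-1263194129216:ℂ)*α*β*β + (-276072758912:ℂ)*α*β*β*δ*δ + (45867734528:ℂ)*α*β*β*δ*δ*δ*δ + (-38177615503264:ℂ)*α*α + (-23271440612512:ℂ)*α*α*δ*δ + (2741536171264:ℂ)*α*α*δ*δ*δ*δ + (28364364288:ℂ)*α*α*δ*δ*δ*δ*δ*δ + (-3789582387648:ℂ)*α*α*β + (-828218276736:ℂ)*α*α*β*δ*δ + (137603203584:ℂ)*α*α*β*δ*δ*δ*δ + (-3789582387648:ℂ)*α*α*α + (-828218276736:ℂ)*α*α*α*δ*δ + (137603203584:ℂ)*α*α*α*δ*δ*δ*δ)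 * hB + ((-1992541814046816:ℂ) + (321271385910048:ℂ)*δ*δ + (16423073291904:ℂ)*δ*δ*δ*δ + (-314296281154352:ℂ)*β + (55181581194768:ℂ)*β*δ*δ + (3480439708224:ℂ)*β*δ*δ*δ*δ + (-1264467035643200:ℂ)*α + (368269900555040:ℂ)*α*δ*δ + (11674811311488:ℂ)*α*δ*δ*δ*δ + (-283090933631312:ℂ)*α*β + (76842686861904:ℂ)*α*β*δ*δ + (2183534571072:ℂ)*α*β*δ*δ*δ*δ + (-138356463453280:ℂ)*α*α + (153718838946816:ℂ)*α*α*δ*δ + (2827534516992:ℂ)*α*α*δ*δ*δ*δ + (-1351295478960:ℂ)*α*α*β + (25699016713536:ℂ)*α*α*β*δ*δ + (383334568704:ℂ)*α*α*β*δ*δ*δ*δ + (96371962860544:ℂ)*α*α*α + (25221600030464:ℂ)*α*α*α*δ*δ + (233330012160:ℂ)*α*α*α*δ*δ*δ*δ + (22248240925552:ℂ)*α*α*α*β + (2747622359936:ℂ)*α*α*α*β*δ*δ + (14182182144:ℂ)*α*α*α*β*δ*δ*δ*δ + (25385681471360:ℂ)*α*α*α*α + (1217219221504:ℂ)*α*α*α*α*δ*δ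 + (2771799184384:ℂ)*α*α*α*α*β + (60049916672:ℂ)*α*α*α*α*β*δ*δ + (1217219221504:ℂ)*α*α*α*α*α + (60049916672:ℂ)*α*α*α*α*α*β) * hD

set_option maxHeartbeats 4000000 in
set_option maxRecDepth 16384 in
lemma p0Fy : eval ![((10+4*α+4*β)/6), ((3*δ)/6), 1] (pderiv 1 F) = 0 := by
  simp [F, A1C, A2C, A3C, A4C, A5C, A6C, A7C, A8C, Qpoly, x, y, z, pderiv_mul, pderiv_pow, pderiv_C, pd00, pd01, pd02, pd10, pd11, pd12, pdn2, pdn3, pdn4, pdn5, pdn6, pdn7, pdn8, Derivation.map_sub, Derivation.map_neg]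
  linear_combination ((1599690807449920/3:ℂ)*δ + (398012057522240/3:ℂ)*β*δ + (2163383194959488/3:ℂ)*α*δ + (399281668288384/3:ℂ)*α*β*δ + (840421924105024/3:ℂ)*α*α*δ + (143967371650496/3:ℂ)*α*α*β*δ + (130501915404032/3:ℂ)*α*α*α*δ + (13748435954048/3:ℂ)*α*α*α*β*δ + (5526129661952/3:ℂ)*α*α*α*α*δ + (226788921856/3:ℂ)*α*α*α*α*β*δ) * hA + ((-1315235089606912/3:ℂ)*δ + (-190703107037248/3:ℂ)*δ*δ*δ + (11455224779520:ℂ)*δ*δ*δ*δ*δ + (-483586606621504/3:ℂ)*β*δ + (3477206299136/3:ℂ)*β*δ*δ*δ + (5440036610560/3:ℂ)*β*δ*δ*δ*δ*δ + (-103246396098752/3:ℂ)*β*β*δ + (2730779573760:ℂ)*β*β*δ*δ*δ + (389975772160/3:ℂ)*β*β*δ*δ*δ*δ*δ + (-5212952375936/3:ℂ)*β*β*β*δ + (545186420224/3:ℂ)*β*β*β*δ*δ*δ + (-2470447108432064/3:ℂ)*α*δ + (54727793647552/3:ℂ)*α*δ*δ*δ + (23678858205440/3:ℂ)*α*δ*δ*δ*δ*δ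 + (-486720386799872/3:ℂ)*α*β*δ + (31664421036544/3:ℂ)*α*β*δ*δ*δ + (2489091028480/3:ℂ)*α*β*δ*δ*δ*δ*δ + (-45892837184704/3:ℂ)*α*β*β*δ + (1389280859648:ℂ)*α*β*β*δ*δ*δ + (31515960320:ℂ)*α*β*β*δ*δ*δ*δ*δ + (-1264337587840/3:ℂ)*α*β*β*β*δ + (132241040896/3:ℂ)*α*β*β*β*δ*δ*δ + (-1036691057514752/3:ℂ)*α*α*δ + (70525698224128/3:ℂ)*α*α*δ*δ*δ + (1630349583360:ℂ)*α*α*δ*δ*δ*δ*δ + (-120878692266176/3:ℂ)*α*α*β*δ + (10746650444800/3:ℂ)*α*α*β*δ*δ*δ + (94547880960:ℂ)*α*α*β*δ*δ*δ*δ*δ + (-5057350351360/3:ℂ)*α*α*β*β*δ + (528964163584/3:ℂ)*α*α*β*β*δ*δ*δ + (-145730265388864/3:ℂ)*α*α*α*δ + (4448655089152:ℂ)*α*α*α*δ*δ*δ + (94547880960:ℂ)*α*α*α*δ*δ*δ*δ*δ + (-2528675175680:ℂ)*α*α*α*β*δ + (264482081792:ℂ)*α*α*α*β*δ*δ*δ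 + (-5057350351360/3:ℂ)*α*α*α*α*δ + (528964163584/3:ℂ)*α*α*α*α*δ*δ*δ) * hB + ((-211437519454528/3:ℂ)*δ + (760979447349760/3:ℂ)*δ*δ*δ + (155542523466688/3:ℂ)*β*δ + (167494483749760/3:ℂ)*β*δ*δ*δ + (3829669496182784/3:ℂ)*α*δ + (725776840695040/3:ℂ)*α*δ*δ*δ + (745135804504064/3:ℂ)*α*β*δ + (137427249649280/3:ℂ)*α*β*δ*δ*δ + (1102947772249792:ℂ)*α*α*δ + (251408976014080/3:ℂ)*α*α*δ*δ*δ + (625122540094784/3:ℂ)*α*α*β*δ + (39796036732160/3:ℂ)*α*α*β*δ*δ*δ + (347438302044928:ℂ)*α*α*α*δ + (37502388106240/3:ℂ)*α*α*α*δ*δ*δ + (163370544093440/3:ℂ)*α*α*α*β*δ + (4347466908160/3:ℂ)*α*α*α*β*δ*δ*δ + (45438075293184:ℂ)*α*α*α*α*δ + (2028272819200/3:ℂ)*α*α*α*α*δ*δ*δ + (13878828932608/3:ℂ)*α*α*α*α*β*δ + (31515960320:ℂ)*α*α*α*α*β*δ*δ*δ + (5526129661952/3:ℂ)*α*α*α*α*α*δ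 + (226788921856/3:ℂ)*α*α*α*α*α*β*δ) * hD

set_option maxHeartbeats 4000000 in
set_option maxRecDepth 16384 in
lemma p0Qx : eval ![((10+4*α+4*β)/6), ((3*δ)/6), 1] (pderiv 0 Qpoly) = ((936:ℂ) + (48:ℂ)*β + (168:ℂ)*α + (48:ℂ)*α*β) := by
  simp [F, A1C, A2C, A3C, A4C, A5C, A6C, A7C, A8C, Qpoly, x, y, z, pderiv_mul, pderiv_pow, pderiv_C, pd00, pd01, pd02, pd10, pd11, pd12, pdn2, pdn3, pdn4, pdn5, pdn6, pdn7, pdn8, Derivation.map_sub, Derivation.map_neg]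
  linear_combination ((96:ℂ) + (-12:ℂ)*β) * hA + ((108:ℂ) + (12:ℂ)*α) * hB + ((-468:ℂ) + (-24:ℂ)*β + (-84:ℂ)*α + (-24:ℂ)*α*β) * hD

set_option maxHeartbeats 4000000 in
set_option maxRecDepth 16384 in
lemma p0Qy : eval ![((10+4*α+4*β)/6), ((3*δ)/6), 1] (pderiv 1 Qpoly) = (0:ℂ) := by
  simp [F, A1C, A2C, A3C, A4C, A5C, A6C, A7C, A8C, Qpoly, x, y, z, pderiv_mul, pderiv_pow, pderiv_C, pd00, pd01, pd02, pd10, pd11, pd12, pdn2, pdn3, pdn4, pdn5, pdn6, pdn7, pdn8, Derivation.map_sub, Derivation.map_neg]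
  linear_combination ((-272:ℂ)*δ + (-32:ℂ)*β*δ) * hA + ((-32:ℂ)*δ + (-32:ℂ)*α*δ) * hB + (0:ℂ) * hD

set_option maxHeartbeats 4000000 in
set_option maxRecDepth 16384 in
lemma p0Qxne : (((936:ℂ) + (48:ℂ)*β + (168:ℂ)*α + (48:ℂ)*α*β) : ℂ) ≠ 0 := by
  intro h
  have h1 : (((936:ℂ) + (48:ℂ)*β + (168:ℂ)*α + (48:ℂ)*α*β) : ℂ) * ((29/3456:ℂ) + (1/1728:ℂ)*β + (1/1152:ℂ)*α + (-1/1728:ℂ)*α*β) = 1 := by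
    linear_combination ((-7/16:ℂ) + (-1/18:ℂ)*β + (-5/36:ℂ)*α) * hA + ((1/36:ℂ) + (-1/36:ℂ)*α*α) * hB + (0:ℂ) * hD
  rw [h, zero_mul] at h1; exact zero_ne_one h1

set_option maxHeartbeats 4000000 in
set_option maxRecDepth 16384 in
lemma p0Cne : (((-443697/2:ℂ) + (-99787/3:ℂ)*β + (-322843/6:ℂ)*α + (-24211/3:ℂ)*α*β) : ℂ) ≠ 0 := by
  intro h
  have h1 : (((-443697/2:ℂ) + (-99787/3:ℂ)*β + (-322843/6:ℂ)*α + (-24211/3:ℂ)*α*β) : ℂ) * ((-212417/4423680:ℂ) + (1285231/8847360:ℂ)*β + (51481/4423680:ℂ)*α + (-103901/2949120:ℂ)*α*β) = 1 := by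
    linear_combination ((4726502837/884736:ℂ) + (19129101133/10616832:ℂ)*β + (2515547111/1769472:ℂ)*α) * hA + ((-128249345797/26542080:ℂ) + (-313/648:ℂ)*α + (2515547111/8847360:ℂ)*α*α) * hB + (0:ℂ) * hD
  rw [h, zero_mul] at h1; exact zero_ne_one h1

set_option maxHeartbeats 4000000 in
set_option maxRecDepth 16384 in
lemma p0XX : eval ![((10+4*α+4*β)/6), ((3*δ)/6), 1] (pderiv 0 (pderiv 0 F)) = 2 * (((-443697/2:ℂ) + (-99787/3:ℂ)*β + (-322843/6:ℂ)*α + (-24211/3:ℂ)*α*β)) * (((936:ℂ) + (48:ℂ)*β + (168:ℂ)*α + (48:ℂ)*α*β) : ℂ)^2 := by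
  simp [F, A1C, A2C, A3C, A4C, A5C, A6C, A7C, A8C, Qpoly, x, y, z, pderiv_mul, pderiv_pow, pderiv_C, pd00, pd01, pd02, pd10, pd11, pd12, pdn2, pdn3, pdn4, pdn5, pdn6, pdn7, pdn8, Derivation.map_sub, Derivation.map_neg]
  linear_combination ((421779894425568:ℂ) + (97330579661616:ℂ)*β + (315399268855680:ℂ)*α + (59835969873456:ℂ)*α*β + (71903054009088:ℂ)*α*α + (8148234447552:ℂ)*α*α*β + (3882734719488:ℂ)*α*α*α + (248951351808:ℂ)*α*α*α*β) * hA + ((-100412032007664:ℂ) + (-114269264835696:ℂ)*δ*δ + (12028124840832:ℂ)*δ*δ*δ*δ + (175489097472:ℂ)*δ*δ*δ*δ*δ*δ + (-23437133655456:ℂ)*β + (-5122144164672:ℂ)*β*δ*δ + (850929064704:ℂ)*β*δ*δ*δ*δ + (-71218960828848:ℂ)*α + (-37958759391600:ℂ)*α*δ*δ + (4619225312640:ℂ)*α*δ*δ*δ*δ + (42546546432:ℂ)*α*δ*δ*δ*δ*δ*δ + (-5684029847712:ℂ)*α*β + (-1242327415104:ℂ)*α*β*δ*δ + (206404805376:ℂ)*α*β*δ*δ*δ*δ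 + (-11364445435968:ℂ)*α*α + (-2484654830208:ℂ)*α*α*δ*δ + (412809610752:ℂ)*α*α*δ*δ*δ*δ + (227649024:ℂ)*α*α*β + (508260096:ℂ)*α*α*α + (37188096:ℂ)*α*α*α*β) * hB + ((-1021829643287808:ℂ) + (248879136515904:ℂ)*δ*δ + (6514891656192:ℂ)*δ*δ*δ*δ + (-299479684789392:ℂ)*β + (62278533231360:ℂ)*β*δ*δ + (1570570987392:ℂ)*β*δ*δ*δ*δ + (-536304126231312:ℂ)*α + (214985323971264:ℂ)*α*δ*δ + (3589082636544:ℂ)*α*δ*δ*δ*δ + (-62175134559936:ℂ)*α*β + (39325696435968:ℂ)*α*β*δ*δ + (556380035712:ℂ)*α*β*δ*δ*δ*δ + (80437056985200:ℂ)*α*α + (53510594438016:ℂ)*α*α*δ*δ + (487257304320:ℂ)*α*α*δ*δ*δ*δ + (26767601380752:ℂ)*α*α*β + (6900862404096:ℂ)*α*α*β*δ*δ + (42546546432:ℂ)*α*α*β*δ*δ*δ*δ + (52486839111168:ℂ)*α*α*α + (3882734719488:ℂ)*α*α*α*δ*δ + (6903291748032:ℂ)*α*α*α*β + (248951351808:ℂ)*α*α*α*β*δ*δ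 + (3882734719488:ℂ)*α*α*α*α + (248951351808:ℂ)*α*α*α*α*β) * hD

set_option maxHeartbeats 4000000 in
set_option maxRecDepth 16384 in
lemma p0XY : eval ![((10+4*α+4*β)/6), ((3*δ)/6), 1] (pderiv 1 (pderiv 0 F)) = 2 * (((-443697/2:ℂ) + (-99787/3:ℂ)*β + (-322843/6:ℂ)*α + (-24211/3:ℂ)*α*β)) * (((936:ℂ) + (48:ℂ)*β + (168:ℂ)*α + (48:ℂ)*α*β) : ℂ) * ((0:ℂ) : ℂ) := by
  simp [F, A1C, A2C, A3C, A4C, A5C, A6C, A7C, A8C, Qpoly, x, y, z, pderiv_mul, pderiv_pow, pderiv_C, pd00, pd01, pd02, pd10, pd11, pd12, pdn2, pdn3, pdn4, pdn5, pdn6, pdn7, pdn8, Derivation.map_sub, Derivation.map_neg]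
  linear_combination ((623847218608768:ℂ)*δ + (124340642820320:ℂ)*β*δ + (487899056731392:ℂ)*α*δ + (98252853098720:ℂ)*α*β*δ + (125971526305024:ℂ)*α*α*δ + (15922210660864:ℂ)*α*α*β*δ + (8006603398144:ℂ)*α*α*α*δ + (406303903232:ℂ)*α*α*α*β*δ) * hA + ((-817610696522240:ℂ)*δ + (30007025047040:ℂ)*δ*δ*δ + (6697645770240:ℂ)*δ*δ*δ*δ*δ + (-171684058820000:ℂ)*β*δ + (14047103805696:ℂ)*β*δ*δ*δ + (584963658240:ℂ)*β*δ*δ*δ*δ*δ + (-10425904751872:ℂ)*β*β*δ + (1090372840448:ℂ)*β*β*δ*δ*δ + (-661055947718720:ℂ)*α*δ + (47859402120192:ℂ)*α*δ*δ*δ + (2794118330880:ℂ)*α*δ*δ*δ*δ*δ + (-72917359291296:ℂ)*α*β*δ + (6678281880832:ℂ)*α*β*δ*δ*δ + (141821821440:ℂ)*α*β*δ*δ*δ*δ*δ + (-2528675175680:ℂ)*α*β*β*δ + (264482081792:ℂ)*α*β*β*δ*δ*δ + (-143512794262336:ℂ)*α*α*δ + (13113927698944:ℂ)*α*α*δ*δ*δ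 + (283643642880:ℂ)*α*α*δ*δ*δ*δ*δ + (-7586025527040:ℂ)*α*α*β*δ + (793446245376:ℂ)*α*α*β*δ*δ*δ + (-7586025527040:ℂ)*α*α*α*δ + (793446245376:ℂ)*α*α*α*δ*δ*δ) * hB + ((1074723365708736:ℂ)*δ + (164230732919040:ℂ)*δ*δ*δ + (164645522497120:ℂ)*β*δ + (34804397082240:ℂ)*β*δ*δ*δ + (1565730818030784:ℂ)*α*δ + (116748113114880:ℂ)*α*δ*δ*δ + (332993188876000:ℂ)*α*β*δ + (21835345710720:ℂ)*α*β*δ*δ*δ + (758395463018752:ℂ)*α*α*δ + (28275345169920:ℂ)*α*α*δ*δ*δ + (131869360678528:ℂ)*α*α*β*δ + (3833345687040:ℂ)*α*α*β*δ*δ*δ + (140181051006464:ℂ)*α*α*α*δ + (2333300121600:ℂ)*α*α*α*δ*δ*δ + (16419366320384:ℂ)*α*α*α*β*δ + (141821821440:ℂ)*α*α*α*β*δ*δ*δ + (8006603398144:ℂ)*α*α*α*α*δ + (406303903232:ℂ)*α*α*α*α*β*δ) * hD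

set_option maxHeartbeats 4000000 in
set_option maxRecDepth 16384 in
lemma p0YY : eval ![((10+4*α+4*β)/6), ((3*δ)/6), 1] (pderiv 1 (pderiv 1 F)) = 2 * (((-443697/2:ℂ) + (-99787/3:ℂ)*β + (-322843/6:ℂ)*α + (-24211/3:ℂ)*α*β)) * ((0:ℂ) : ℂ)^2 := by
  simp [F, A1C, A2C, A3C, A4C, A5C, A6C, A7C, A8C, Qpoly, x, y, z, pderiv_mul, pderiv_pow, pderiv_C, pd00, pd01, pd02, pd10, pd11, pd12, pdn2, pdn3, pdn4, pdn5, pdn6, pdn7, pdn8, Derivation.map_sub, Derivation.map_neg]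
  linear_combination ((8441277188105728/3:ℂ) + (614995927838976:ℂ)*β + (3245508817540096:ℂ)*α + (623356007997696:ℂ)*α*β + (3745159910423552/3:ℂ)*α*α + (619211163060224/3:ℂ)*α*α*β + (587549211388928/3:ℂ)*α*α*α + (22213586163712:ℂ)*α*α*α*β + (29082995499008/3:ℂ)*α*α*α*α + (414149969920:ℂ)*α*α*α*α*β) * hA + ((-3021348211160320/3:ℂ) + (-767550991901440:ℂ)*δ*δ + (91641798236160:ℂ)*δ*δ*δ*δ + (-1017506572875776/3:ℂ)*β + (-107834959386624:ℂ)*β*δ*δ + (43520292884480/3:ℂ)*β*δ*δ*δ*δ + (-239212018527232/3:ℂ)*β*β + (-237871601664:ℂ)*β*β*δ*δ + (3119806177280/3:ℂ)*β*β*δ*δ*δ*δ + (-16298792468480/3:ℂ)*β*β*β + (667982899200:ℂ)*β*β*β*δ*δ + (-5513288947316992/3:ℂ)*α + (-404287713620736:ℂ)*α*δ*δ + (189430865643520/3:ℂ)*α*δ*δ*δ*δ + (-1151056585680896/3:ℂ)*α*β + (-19216971397120:ℂ)*α*β*δ*δ + (19912728227840/3:ℂ)*α*β*δ*δ*δ*δ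 + (-123212802952192/3:ℂ)*α*β*β + (2614443624448:ℂ)*α*β*β*δ*δ + (252127682560:ℂ)*α*β*β*δ*δ*δ*δ + (-3953059315712/3:ℂ)*α*β*β*β + (162022287360:ℂ)*α*β*β*β*δ*δ + (-839496336849920:ℂ)*α*α + (-27327641391104:ℂ)*α*α*δ*δ + (13042796666880:ℂ)*α*α*δ*δ*δ*δ + (-317112085606400/3:ℂ)*α*α*β + (5690703482880:ℂ)*α*α*β*δ*δ + (756383047680:ℂ)*α*α*β*δ*δ*δ*δ + (-15812237262848/3:ℂ)*α*α*β*β + (648089149440:ℂ)*α*α*β*β*δ*δ + (-131604220123136:ℂ)*α*α*α + (8875389130752:ℂ)*α*α*α*δ*δ + (756383047680:ℂ)*α*α*α*δ*δ*δ*δ + (-7906118631424:ℂ)*α*α*α*β + (972133724160:ℂ)*α*α*α*β*δ*δ + (-15812237262848/3:ℂ)*α*α*α*α + (648089149440:ℂ)*α*α*α*α*δ*δ) * hB + ((-16618745259238400/3:ℂ) + (6087835578798080/3:ℂ)*δ*δ + (-3098380741009664/3:ℂ)*β + (1339955869998080/3:ℂ)*β*δ*δ + (-1585149135714560:ℂ)*α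 + (5806214725560320/3:ℂ)*α*δ*δ + (-798245063194112/3:ℂ)*α*β + (1099417997194240/3:ℂ)*α*β*δ*δ + (1836130595420928:ℂ)*α*α + (2011271808112640/3:ℂ)*α*α*δ*δ + (410264527544576:ℂ)*α*α*β + (318368293857280/3:ℂ)*α*α*β*δ*δ + (1046097936263168:ℂ)*α*α*α + (300019104849920/3:ℂ)*α*α*α*δ*δ + (545593283268608/3:ℂ)*α*α*α*β + (34779735265280/3:ℂ)*α*α*α*β*δ*δ + (182232185063424:ℂ)*α*α*α*α + (16226182553600/3:ℂ)*α*α*α*α*δ*δ + (64381568258048/3:ℂ)*α*α*α*α*β + (252127682560:ℂ)*α*α*α*α*β*δ*δ + (29082995499008/3:ℂ)*α*α*α*α*α + (414149969920:ℂ)*α*α*α*α*α*β) * hD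

lemma tacP0 : TacnodeTangentToQAt ((10+4*α+4*β)/6) ((3*δ)/6) := by
  refine ⟨p0F, p0Fx, p0Fy, fun h => p0Qxne (by rw [← p0Qx]; exact h.1), ((-443697/2:ℂ) + (-99787/3:ℂ)*β + (-322843/6:ℂ)*α + (-24211/3:ℂ)*α*β), p0Cne, ?_, ?_, ?_⟩
  · rw [p0Qx]; exact p0XX
  · rw [p0Qx, p0Qy]; exact p0XY
  · rw [p0Qy]; exact p0YY

set_option maxHeartbeats 4000000 in
set_option maxRecDepth 16384 in
lemma p1F : eval ![1, 0, 1] F = 0 := by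
  simp [F, A1C, A2C, A3C, A4C, A5C, A6C, A7C, A8C, Qpoly, x, y, z, pderiv_mul, pderiv_pow, pderiv_C, pd00, pd01, pd02, pd10, pd11, pd12, pdn2, pdn3, pdn4, pdn5, pdn6, pdn7, pdn8, Derivation.map_sub, Derivation.map_neg]
  linear_combination (0:ℂ) * hA + (0:ℂ) * hB + (0:ℂ) * hD

set_option maxHeartbeats 4000000 in
set_option maxRecDepth 16384 in
lemma p1Fx : eval ![1, 0, 1] (pderiv 0 F) = 0 := by
  simp [F, A1C, A2C, A3C, A4C, A5C, A6C, A7C, A8C, Qpoly, x, y, z, pderiv_mul, pderiv_pow, pderiv_C, pd00, pd01, pd02, pd10, pd11, pd12, pdn2, pdn3, pdn4, pdn5, pdn6, pdn7, pdn8, Derivation.map_sub, Derivation.map_neg]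
  linear_combination (0:ℂ) * hA + (0:ℂ) * hB + (0:ℂ) * hD

set_option maxHeartbeats 4000000 in
set_option maxRecDepth 16384 in
lemma p1Fy : eval ![1, 0, 1] (pderiv 1 F) = 0 := by
  simp [F, A1C, A2C, A3C, A4C, A5C, A6C, A7C, A8C, Qpoly, x, y, z, pderiv_mul, pderiv_pow, pderiv_C, pd00, pd01, pd02, pd10, pd11, pd12, pdn2, pdn3, pdn4, pdn5, pdn6, pdn7, pdn8, Derivation.map_sub, Derivation.map_neg]
  linear_combination (0:ℂ) * hA + (0:ℂ) * hB + (0:ℂ) * hD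

set_option maxHeartbeats 4000000 in
set_option maxRecDepth 16384 in
lemma p1Qx : eval ![1, 0, 1] (pderiv 0 Qpoly) = ((-936:ℂ) + (-48:ℂ)*β + (-168:ℂ)*α + (-48:ℂ)*α*β) := by
  simp [F, A1C, A2C, A3C, A4C, A5C, A6C, A7C, A8C, Qpoly, x, y, z, pderiv_mul, pderiv_pow, pderiv_C, pd00, pd01, pd02, pd10, pd11, pd12, pdn2, pdn3, pdn4, pdn5, pdn6, pdn7, pdn8, Derivation.map_sub, Derivation.map_neg]
  linear_combination (0:ℂ) * hA + (0:ℂ) * hB + (0:ℂ) * hD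

set_option maxHeartbeats 4000000 in
set_option maxRecDepth 16384 in
lemma p1Qy : eval ![1, 0, 1] (pderiv 1 Qpoly) = (0:ℂ) := by
  simp [F, A1C, A2C, A3C, A4C, A5C, A6C, A7C, A8C, Qpoly, x, y, z, pderiv_mul, pderiv_pow, pderiv_C, pd00, pd01, pd02, pd10, pd11, pd12, pdn2, pdn3, pdn4, pdn5, pdn6, pdn7, pdn8, Derivation.map_sub, Derivation.map_neg]
  linear_combination (0:ℂ) * hA + (0:ℂ) * hB + (0:ℂ) * hD

set_option maxHeartbeats 4000000 in
set_option maxRecDepth 16384 in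
lemma p1Qxne : (((-936:ℂ) + (-48:ℂ)*β + (-168:ℂ)*α + (-48:ℂ)*α*β) : ℂ) ≠ 0 := by
  intro h
  have h1 : (((-936:ℂ) + (-48:ℂ)*β + (-168:ℂ)*α + (-48:ℂ)*α*β) : ℂ) * ((-29/3456:ℂ) + (-1/1728:ℂ)*β + (-1/1152:ℂ)*α + (1/1728:ℂ)*α*β) = 1 := by
    linear_combination ((-7/16:ℂ) + (-1/18:ℂ)*β + (-5/36:ℂ)*α) * hA + ((1/36:ℂ) + (-1/36:ℂ)*α*α) * hB + (0:ℂ) * hD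
  rw [h, zero_mul] at h1; exact zero_ne_one h1

set_option maxHeartbeats 4000000 in
set_option maxRecDepth 16384 in
lemma p1Cne : (((-125262259/6:ℂ) + (-3236259:ℂ)*β + (-30380603/6:ℂ)*α + (-2354689/3:ℂ)*α*β) : ℂ) ≠ 0 := by
  intro h
  have h1 : (((-125262259/6:ℂ) + (-3236259:ℂ)*β + (-30380603/6:ℂ)*α + (-2354689/3:ℂ)*α*β) : ℂ) * ((-101071/294912:ℂ) + (-996851/1769472:ℂ)*β + (364153/4423680:ℂ)*α + (1209959/8847360:ℂ)*α*β) = 1 := by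
    linear_combination ((-2364935542309/884736:ℂ) + (-8037830455789/10616832:ℂ)*β + (-2849077147751/5308416:ℂ)*α) * hA + ((1075356006803/589824:ℂ) + (-1324669/3240:ℂ)*α + (-2849077147751/26542080:ℂ)*α*α) * hB + (0:ℂ) * hD
  rw [h, zero_mul] at h1; exact zero_ne_one h1

set_option maxHeartbeats 4000000 in
set_option maxRecDepth 16384 in
lemma p1XX : eval ![1, 0, 1] (pderiv 0 (pderiv 0 F)) = 2 * (((-125262259/6:ℂ) + (-3236259:ℂ)*β + (-30380603/6:ℂ)*α + (-2354689/3:ℂ)*α*β)) * (((-936:ℂ) + (-48:ℂ)*β + (-168:ℂ)*α + (-48:ℂ)*α*β) : ℂ)^2 := by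
  simp [F, A1C, A2C, A3C, A4C, A5C, A6C, A7C, A8C, Qpoly, x, y, z, pderiv_mul, pderiv_pow, pderiv_C, pd00, pd01, pd02, pd10, pd11, pd12, pdn2, pdn3, pdn4, pdn5, pdn6, pdn7, pdn8, Derivation.map_sub, Derivation.map_neg]
  linear_combination ((22398620339136:ℂ) + (3362780739456:ℂ)*β + (3375607503936:ℂ)*α + (394316228736:ℂ)*α*β + (243249596160:ℂ)*α*α + (18084011520:ℂ)*α*α*β) * hA + ((677795992320:ℂ) + (14912681472:ℂ)*β + (1042773770496:ℂ)*α + (33442165248:ℂ)*α*β + (413627697408:ℂ)*α*α + (22146286080:ℂ)*α*α*β + (48649919232:ℂ)*α*α*α + (3616802304:ℂ)*α*α*α*β) * hB + (0:ℂ) * hD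

set_option maxHeartbeats 4000000 in
set_option maxRecDepth 16384 in
lemma p1XY : eval ![1, 0, 1] (pderiv 1 (pderiv 0 F)) = 2 * (((-125262259/6:ℂ) + (-3236259:ℂ)*β + (-30380603/6:ℂ)*α + (-2354689/3:ℂ)*α*β)) * (((-936:ℂ) + (-48:ℂ)*β + (-168:ℂ)*α + (-48:ℂ)*α*β) : ℂ) * ((0:ℂ) : ℂ) := by
  simp [F, A1C, A2C, A3C, A4C, A5C, A6C, A7C, A8C, Qpoly, x, y, z, pderiv_mul, pderiv_pow, pderiv_C, pd00, pd01, pd02, pd10, pd11, pd12, pdn2, pdn3, pdn4, pdn5, pdn6, pdn7, pdn8, Derivation.map_sub, Derivation.map_neg]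
  linear_combination (0:ℂ) * hA + (0:ℂ) * hB + (0:ℂ) * hD

set_option maxHeartbeats 4000000 in
set_option maxRecDepth 16384 in
lemma p1YY : eval ![1, 0, 1] (pderiv 1 (pderiv 1 F)) = 2 * (((-125262259/6:ℂ) + (-3236259:ℂ)*β + (-30380603/6:ℂ)*α + (-2354689/3:ℂ)*α*β)) * ((0:ℂ) : ℂ)^2 := by
  simp [F, A1C, A2C, A3C, A4C, A5C, A6C, A7C, A8C, Qpoly, x, y, z, pderiv_mul, pderiv_pow, pderiv_C, pd00, pd01, pd02, pd10, pd11, pd12, pdn2, pdn3, pdn4, pdn5, pdn6, pdn7, pdn8, Derivation.map_sub, Derivation.map_neg]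
  linear_combination (0:ℂ) * hA + (0:ℂ) * hB + (0:ℂ) * hD

lemma tacP1 : TacnodeTangentToQAt 1 0 := by
  refine ⟨p1F, p1Fx, p1Fy, fun h => p1Qxne (by rw [← p1Qx]; exact h.1), ((-125262259/6:ℂ) + (-3236259:ℂ)*β + (-30380603/6:ℂ)*α + (-2354689/3:ℂ)*α*β), p1Cne, ?_, ?_, ?_⟩
  · rw [p1Qx]; exact p1XX
  · rw [p1Qx, p1Qy]; exact p1XY
  · rw [p1Qy]; exact p1YY

set_option maxHeartbeats 4000000 in
set_option maxRecDepth 16384 in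
lemma p2F : eval ![((16+4*α+4*β)/12), ((3*δ+6)/12), 1] F = 0 := by
  simp [F, A1C, A2C, A3C, A4C, A5C, A6C, A7C, A8C, Qpoly, x, y, z, pderiv_mul, pderiv_pow, pderiv_C, pd00, pd01, pd02, pd10, pd11, pd12, pdn2, pdn3, pdn4, pdn5, pdn6, pdn7, pdn8, Derivation.map_sub, Derivation.map_neg]
  linear_combination ((-6166929716247:ℂ) + (-21254179495112/3:ℂ)*δ + (2451591412748/3:ℂ)*β + (1208250896756/3:ℂ)*β*δ + (35144058396811/3:ℂ)*α + (20850122665916/3:ℂ)*α*δ + (8002249574462/3:ℂ)*α*β + (2738979232324/3:ℂ)*α*β*δ + (27534498490258/3:ℂ)*α*α + (10638455538956/3:ℂ)*α*α*δ + (1588895853164:ℂ)*α*α*β + (2234982306140/3:ℂ)*α*α*β*δ + (6447043562662/3:ℂ)*α*α*α + (1754447742868/3:ℂ)*α*α*α*δ + (940002109328/3:ℂ)*α*α*α*β + (134339579572/3:ℂ)*α*α*α*β*δ + (534401249363/3:ℂ)*α*α*α*α + (37465991084/3:ℂ)*α*α*α*α*δ + (31292053952/3:ℂ)*α*α*α*α*β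 + (1486244584/3:ℂ)*α*α*α*α*β*δ + (5808470959/3:ℂ)*α*α*α*α*α + (75525526:ℂ)*α*α*α*α*α*β) * hA + ((8054450497737:ℂ) + (23030261479424/3:ℂ)*δ + (-2482075261908:ℂ)*δ*δ + (-4677001817092/3:ℂ)*δ*δ*δ + (41586838079/3:ℂ)*δ*δ*δ*δ + (74337172020:ℂ)*δ*δ*δ*δ*δ + (7433717202:ℂ)*δ*δ*δ*δ*δ*δ + (536322409954:ℂ)*β + (-2474102276472:ℂ)*β*δ + (-685902253140:ℂ)*β*δ*δ + (703825331452/3:ℂ)*β*δ*δ*δ + (83714870920:ℂ)*β*δ*δ*δ*δ + (28105185880/3:ℂ)*β*δ*δ*δ*δ*δ + (2810518588/3:ℂ)*β*δ*δ*δ*δ*δ*δ + (-1649785411919/3:ℂ)*β*β + (-798948722644:ℂ)*β*β*δ + (-263652532832/3:ℂ)*β*β*δ*δ + (222860425384/3:ℂ)*β*β*δ*δ*δ + (46504965349/3:ℂ)*β*β*δ*δ*δ*δ + (1523342860/3:ℂ)*β*β*δ*δ*δ*δ*δ + (152334286/3:ℂ)*β*β*δ*δ*δ*δ*δ*δ +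 (-290783866378/3:ℂ)*β*β*β + (-10117276396:ℂ)*β*β*β*δ + (22912200670/3:ℂ)*β*β*β*δ*δ + (4604575516/3:ℂ)*β*β*β*δ*δ*δ + (260605676:ℂ)*β*β*β*δ*δ*δ*δ + (-9925155211420/3:ℂ)*α + (-36716898205228/3:ℂ)*α*δ + (-8931574342820/3:ℂ)*α*δ*δ + (942355965516:ℂ)*α*δ*δ*δ + (1045178365436/3:ℂ)*α*δ*δ*δ*δ + (127732075760/3:ℂ)*α*δ*δ*δ*δ*δ + (12773207576/3:ℂ)*α*δ*δ*δ*δ*δ*δ + (-7888906578112/3:ℂ)*α*β + (-9338267810144/3:ℂ)*α*β*δ + (-342546058336:ℂ)*α*β*δ*δ + (892015779328/3:ℂ)*α*β*δ*δ*δ + (209375610796/3:ℂ)*α*β*δ*δ*δ*δ + (11384986300/3:ℂ)*α*β*δ*δ*δ*δ*δ + (1138498630/3:ℂ)*α*β*δ*δ*δ*δ*δ*δ + (-521089827125:ℂ)*α*β*β + (-234242660452:ℂ)*α*β*β*δ + (27706338328/3:ℂ)*α*β*β*δ*δ + (72471008984/3:ℂ)*α*β*β*δ*δ*δ + (14406200237/3:ℂ)*α*β*β*δ*δ*δ*δ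 + (123109220:ℂ)*α*β*β*δ*δ*δ*δ*δ + (12310922:ℂ)*α*β*β*δ*δ*δ*δ*δ*δ + (-23508553342:ℂ)*α*β*β*β + (-7361474596/3:ℂ)*α*β*β*β*δ + (5557232174/3:ℂ)*α*β*β*β*δ*δ + (1116916924/3:ℂ)*α*β*β*β*δ*δ*δ + (63214604:ℂ)*α*β*β*β*δ*δ*δ*δ + (-20221197065377/3:ℂ)*α*α + (-6214951804576:ℂ)*α*α*δ + (-1617461163070/3:ℂ)*α*α*δ*δ + (1810588639184/3:ℂ)*α*α*δ*δ*δ + (140442529557:ℂ)*α*α*δ*δ*δ*δ + (7476536040:ℂ)*α*α*δ*δ*δ*δ*δ + (747653604:ℂ)*α*α*δ*δ*δ*δ*δ*δ + (-3752694381634/3:ℂ)*α*α*β + (-670122964400:ℂ)*α*α*β*δ + (9281005648/3:ℂ)*α*α*β*δ*δ + (202574870380/3:ℂ)*α*α*β*δ*δ*δ + (13566406084:ℂ)*α*α*β*δ*δ*δ*δ + (369327660:ℂ)*α*α*β*δ*δ*δ*δ*δ + (36932766:ℂ)*α*α*β*δ*δ*δ*δ*δ*δ + (-94034213368:ℂ)*α*α*β*β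 + (-29445898384/3:ℂ)*α*α*β*β*δ + (22228928696/3:ℂ)*α*α*β*β*δ*δ + (4467667696/3:ℂ)*α*α*β*β*δ*δ*δ + (252858416:ℂ)*α*α*β*β*δ*δ*δ*δ + (-5138933220562/3:ℂ)*α*α*α + (-2155064456324/3:ℂ)*α*α*α*δ + (118513154546/3:ℂ)*α*α*α*δ*δ + (74842965672:ℂ)*α*α*α*δ*δ*δ + (14808947558:ℂ)*α*α*α*δ*δ*δ*δ + (369327660:ℂ)*α*α*α*δ*δ*δ*δ*δ + (36932766:ℂ)*α*α*α*δ*δ*δ*δ*δ*δ + (-141051320052:ℂ)*α*α*α*β + (-14722949192:ℂ)*α*α*α*β*δ + (11114464348:ℂ)*α*α*α*β*δ*δ + (2233833848:ℂ)*α*α*α*β*δ*δ*δ + (379287624:ℂ)*α*α*α*β*δ*δ*δ*δ + (-94034213368:ℂ)*α*α*α*α + (-29445898384/3:ℂ)*α*α*α*α*δ + (22228928696/3:ℂ)*α*α*α*α*δ*δ + (4467667696/3:ℂ)*α*α*α*α*δ*δ*δ + (252858416:ℂ)*α*α*α*α*δ*δ*δ*δ) * hB + ((-66698053032695/3:ℂ)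 + (-68660526081848/3:ℂ)*δ + (4058487448129/3:ℂ)*δ*δ + (5312046417100/3:ℂ)*δ*δ*δ + (531204641710/3:ℂ)*δ*δ*δ*δ + (-43248157075892/3:ℂ)*β + (-12732121672612/3:ℂ)*β*δ + (1266454772056/3:ℂ)*β*δ*δ + (1159306281400/3:ℂ)*β*δ*δ*δ + (115930628140/3:ℂ)*β*δ*δ*δ*δ + (-39747868786212:ℂ)*α + (30356397373952/3:ℂ)*α*δ + (6785895268261:ℂ)*α*δ*δ + (4421548257340/3:ℂ)*α*δ*δ*δ + (442154825734/3:ℂ)*α*δ*δ*δ*δ + (-13696864522622/3:ℂ)*α*β + (5986104358436/3:ℂ)*α*β*δ + (3922965880100/3:ℂ)*α*β*δ*δ + (826555025060/3:ℂ)*α*β*δ*δ*δ + (82655502506/3:ℂ)*α*β*δ*δ*δ*δ + (7540948376324/3:ℂ)*α*α + (50976093123280/3:ℂ)*α*α*δ + (13843194142037/3:ℂ)*α*α*δ*δ + (1341968246440/3:ℂ)*α*α*δ*δ*δ + (134196824644/3:ℂ)*α*α*δ*δ*δ*δ + (3736142354716/3:ℂ)*α*α*β + (10385184617708/3:ℂ)*α*α*β*δ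 + (859092842240:ℂ)*α*α*β*δ*δ + (202868249960/3:ℂ)*α*α*β*δ*δ*δ + (20286824996/3:ℂ)*α*α*β*δ*δ*δ*δ + (23155756878374/3:ℂ)*α*α*α + (16225595434276/3:ℂ)*α*α*α*δ + (3476947379743/3:ℂ)*α*α*α*δ*δ + (173837064340/3:ℂ)*α*α*α*δ*δ*δ + (17383706434/3:ℂ)*α*α*α*δ*δ*δ*δ + (1375630757060:ℂ)*α*α*α*β + (837783125828:ℂ)*α*α*α*β*δ + (168433676416:ℂ)*α*α*α*β*δ*δ + (18644267080/3:ℂ)*α*α*α*β*δ*δ*δ + (1864426708/3:ℂ)*α*α*α*β*δ*δ*δ*δ + (1895659706562:ℂ)*α*α*α*α + (587278610216:ℂ)*α*α*α*α*δ + (109774287493:ℂ)*α*α*α*α*δ*δ + (7922940700/3:ℂ)*α*α*α*α*δ*δ*δ + (792294070/3:ℂ)*α*α*α*α*δ*δ*δ*δ + (855880112218/3:ℂ)*α*α*α*α*β + (44756610416:ℂ)*α*α*α*α*β*δ + (7823018666:ℂ)*α*α*α*α*β*δ*δ + (123109220:ℂ)*α*α*α*α*β*δ*δ*δ + (12310922:ℂ)*α*α*α*α*β*δ*δ*δ*δ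 + (168452964856:ℂ)*α*α*α*α*α + (37465991084/3:ℂ)*α*α*α*α*α*δ + (5808470959/3:ℂ)*α*α*α*α*α*δ*δ + (30159171062/3:ℂ)*α*α*α*α*α*β + (1486244584/3:ℂ)*α*α*α*α*α*β*δ + (75525526:ℂ)*α*α*α*α*α*β*δ*δ + (5808470959/3:ℂ)*α*α*α*α*α*α + (75525526:ℂ)*α*α*α*α*α*α*β) * hD

set_option maxHeartbeats 4000000 in
set_option maxRecDepth 16384 in
lemma p2Fx : eval ![((16+4*α+4*β)/12), ((3*δ+6)/12), 1] (pderiv 0 F) = 0 := by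
  simp [F, A1C, A2C, A3C, A4C, A5C, A6C, A7C, A8C, Qpoly, x, y, z, pderiv_mul, pderiv_pow, pderiv_C, pd00, pd01, pd02, pd10, pd11, pd12, pdn2, pdn3, pdn4, pdn5, pdn6, pdn7, pdn8, Derivation.map_sub, Derivation.map_neg]
  linear_combination ((23930905989500:ℂ) + (17377439203144:ℂ)*δ + (3835985775432:ℂ)*β + (1051316840696:ℂ)*β*δ + (30473718199820:ℂ)*α + (12041883645992:ℂ)*α*δ + (5730685614990:ℂ)*α*β + (3343307001732:ℂ)*α*β*δ + (11026134781400:ℂ)*α*α + (3821397497008:ℂ)*α*α*δ + (1920317087014:ℂ)*α*α*β + (349678077416:ℂ)*α*α*β*δ + (1396303217724:ℂ)*α*α*α + (114062770256:ℂ)*α*α*α*δ + (94156250906:ℂ)*α*α*α*β + (5575650676:ℂ)*α*α*α*β*δ + (18094722036:ℂ)*α*α*α*α + (869373546:ℂ)*α*α*α*α*β) * hA + ((-7536657784500:ℂ) + (-30318353285312:ℂ)*δ + (-5807408314024:ℂ)*δ*δ + (2847099267328:ℂ)*δ*δ*δ + (802588880540:ℂ)*δ*δ*δ*δ + (66035443320:ℂ)*δ*δ*δ*δ*δ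 + (6603544332:ℂ)*δ*δ*δ*δ*δ*δ + (-6825208359748:ℂ)*β + (-7386339032420:ℂ)*β*δ + (-643147726042:ℂ)*β*δ*δ + (698287434456:ℂ)*β*δ*δ*δ + (144558759936:ℂ)*β*δ*δ*δ*δ + (4570028580:ℂ)*β*δ*δ*δ*δ*δ + (457002858:ℂ)*β*δ*δ*δ*δ*δ*δ + (-1163135465512:ℂ)*β*β + (-121407316752:ℂ)*β*β*δ + (91648802680:ℂ)*β*β*δ*δ + (18418302064:ℂ)*β*β*δ*δ*δ + (3127268112:ℂ)*β*β*δ*δ*δ*δ + (-28797439593792:ℂ)*α + (-23516192180376:ℂ)*α*δ + (-1645276822444:ℂ)*α*δ*δ + (2298024855648:ℂ)*α*δ*δ*δ + (519579415760:ℂ)*α*δ*δ*δ*δ + (25152998400:ℂ)*α*δ*δ*δ*δ*δ + (2515299840:ℂ)*α*δ*δ*δ*δ*δ*δ + (-5144769279772:ℂ)*α*β + (-2155672495348:ℂ)*α*β*δ + (118968048798:ℂ)*α*β*δ*δ + (224617738856:ℂ)*α*β*δ*δ*δ + (44441901360:ℂ)*α*β*δ*δ*δ*δ + (1107982980:ℂ)*α*β*δ*δ*δ*δ*δ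 + (110798298:ℂ)*α*β*δ*δ*δ*δ*δ*δ + (-282102640104:ℂ)*α*β*β + (-29445898384:ℂ)*α*β*β*δ + (22228928696:ℂ)*α*β*β*δ*δ + (4467667696:ℂ)*α*β*β*δ*δ*δ + (758575248:ℂ)*α*β*β*δ*δ*δ*δ + (-10030488706116:ℂ)*α*α + (-4284306737480:ℂ)*α*α*δ + (217530468292:ℂ)*α*α*δ*δ + (445137757616:ℂ)*α*α*δ*δ*δ + (88188077220:ℂ)*α*α*δ*δ*δ*δ + (2215965960:ℂ)*α*α*δ*δ*δ*δ*δ + (221596596:ℂ)*α*α*δ*δ*δ*δ*δ*δ + (-846307920312:ℂ)*α*α*β + (-88337695152:ℂ)*α*α*β*δ + (66686786088:ℂ)*α*α*β*δ*δ + (13403003088:ℂ)*α*α*β*δ*δ*δ + (2275725744:ℂ)*α*α*β*δ*δ*δ*δ + (-846307920312:ℂ)*α*α*α + (-88337695152:ℂ)*α*α*α*δ + (66686786088:ℂ)*α*α*α*δ*δ + (13403003088:ℂ)*α*α*α*δ*δ*δ + (2275725744:ℂ)*α*α*α*δ*δ*δ*δ) * hB + ((-73508033342748:ℂ) + (35307283661568:ℂ)*δ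 + (13114210487940:ℂ)*δ*δ + (1858347744600:ℂ)*δ*δ*δ + (185834774460:ℂ)*δ*δ*δ*δ + (-4211149300312:ℂ)*β + (3209704027760:ℂ)*β*δ + (2091910690088:ℂ)*β*δ*δ + (404892774900:ℂ)*β*δ*δ*δ + (40489277490:ℂ)*β*δ*δ*δ*δ + (17659462036724:ℂ)*α + (53960529252024:ℂ)*α*δ + (14159267259584:ℂ)*α*δ*δ + (1208577138840:ℂ)*α*δ*δ*δ + (120857713884:ℂ)*α*δ*δ*δ*δ + (727686250606:ℂ)*α*β + (12625425694304:ℂ)*α*β*δ + (3066117797732:ℂ)*α*β*δ*δ + (216548790360:ℂ)*α*β*δ*δ*δ + (21654879036:ℂ)*α*β*δ*δ*δ*δ + (29899989455724:ℂ)*α*α + (25080274980728:ℂ)*α*α*δ + (5400112576508:ℂ)*α*α*δ*δ + (258968111040:ℂ)*α*α*δ*δ*δ + (25896811104:ℂ)*α*α*δ*δ*δ*δ + (6126786680292:ℂ)*α*α*β + (4226747075984:ℂ)*α*α*β*δ + (866528882816:ℂ)*α*α*β*δ*δ + (33271962120:ℂ)*α*α*β*δ*δ*δ + (3327196212:ℂ)*α*α*β*δ*δ*δ*δ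 + (10240759413216:ℂ)*α*α*α + (3882726326608:ℂ)*α*α*α*δ + (738525931668:ℂ)*α*α*α*δ*δ + (18228907200:ℂ)*α*α*α*δ*δ*δ + (1822890720:ℂ)*α*α*α*δ*δ*δ*δ + (1738593460956:ℂ)*α*α*α*β + (351245722420:ℂ)*α*α*α*β*δ + (63233586750:ℂ)*α*α*α*β*δ*δ + (1107982980:ℂ)*α*α*α*β*δ*δ*δ + (110798298:ℂ)*α*α*α*β*δ*δ*δ*δ + (1305829607544:ℂ)*α*α*α*α + (114062770256:ℂ)*α*α*α*α*δ + (18094722036:ℂ)*α*α*α*α*δ*δ + (89809383176:ℂ)*α*α*α*α*β + (5575650676:ℂ)*α*α*α*α*β*δ + (869373546:ℂ)*α*α*α*α*β*δ*δ + (18094722036:ℂ)*α*α*α*α*α + (869373546:ℂ)*α*α*α*α*α*β) * hD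

set_option maxHeartbeats 4000000 in
set_option maxRecDepth 16384 in
lemma p2Fy : eval ![((16+4*α+4*β)/12), ((3*δ+6)/12), 1] (pderiv 1 F) = 0 := by
  simp [F, A1C, A2C, A3C, A4C, A5C, A6C, A7C, A8C, Qpoly, x, y, z, pderiv_mul, pderiv_pow, pderiv_C, pd00, pd01, pd02, pd10, pd11, pd12, pdn2, pdn3, pdn4, pdn5, pdn6, pdn7, pdn8, Derivation.map_sub, Derivation.map_neg]
  linear_combination ((-39056671485568/3:ℂ) + (-3502752694640:ℂ)*δ + (6858599726944/3:ℂ)*β + (8773754706728/3:ℂ)*β*δ + (140546313732416/3:ℂ)*α + (24650042758312:ℂ)*α*δ + (26990872852448/3:ℂ)*α*β + (12300737871496/3:ℂ)*α*β*δ + (23575175016448:ℂ)*α*α + (9620341485192:ℂ)*α*α*δ + (4427459029024:ℂ)*α*α*β + (5349375358840/3:ℂ)*α*α*β*δ + (3835689313120:ℂ)*α*α*α + (3896354722984/3:ℂ)*α*α*α*δ + (1044453473344/3:ℂ)*α*α*α*β + (285560840744/3:ℂ)*α*α*α*β*δ + (354247279072/3:ℂ)*α*α*α*α + (74931982168/3:ℂ)*α*α*α*α*δ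 + (4836480928:ℂ)*α*α*α*α*β + (2972489168/3:ℂ)*α*α*α*α*β*δ) * hA + ((130425633032128/3:ℂ) + (-40645329720256/3:ℂ)*δ + (-19716477318144:ℂ)*δ*δ + (-2217635120264/3:ℂ)*δ*δ*δ + (1189394752320:ℂ)*δ*δ*δ*δ + (148674344040:ℂ)*δ*δ*δ*δ*δ + (-28435519933568/3:ℂ)*β + (-26647206893968/3:ℂ)*β*δ + (-23147284832/3:ℂ)*β*δ*δ + (2307016611064/3:ℂ)*β*δ*δ*δ + (449682974080/3:ℂ)*β*δ*δ*δ*δ + (56210371760/3:ℂ)*β*δ*δ*δ*δ*δ + (-11662590869728/3:ℂ)*β*β + (-4987726039160/3:ℂ)*β*β*δ + (1274149307872/3:ℂ)*β*β*δ*δ + (494467822288/3:ℂ)*β*β*δ*δ*δ + (24373485760/3:ℂ)*β*β*δ*δ*δ*δ + (3046685720/3:ℂ)*β*β*δ*δ*δ*δ*δ + (-171620723456:ℂ)*β*β*β + (-13276397592:ℂ)*β*β*β*δ + (11818459232:ℂ)*β*β*β*δ*δ + (9209151032/3:ℂ)*β*β*β*δ*δ*δ + (-158984724982304/3:ℂ)*α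 + (-40093909767304:ℂ)*α*δ + (211917829856/3:ℂ)*α*δ*δ + (9741562217416/3:ℂ)*α*δ*δ*δ + (2043713212160/3:ℂ)*α*δ*δ*δ*δ + (255464151520/3:ℂ)*α*δ*δ*δ*δ*δ + (-47780142585088/3:ℂ)*α*β + (-7294029231680:ℂ)*α*β*δ + (4222876560256/3:ℂ)*α*β*δ*δ + (2148351120256/3:ℂ)*α*β*δ*δ*δ + (182159780800/3:ℂ)*α*β*δ*δ*δ*δ + (22769972600/3:ℂ)*α*β*δ*δ*δ*δ*δ + (-4888053035488/3:ℂ)*α*β*β + (-1369010301656/3:ℂ)*α*β*β*δ + (150285624608:ℂ)*α*β*β*δ*δ + (156760503088/3:ℂ)*α*β*β*δ*δ*δ + (1969747520:ℂ)*α*β*β*δ*δ*δ*δ + (246218440:ℂ)*α*β*β*δ*δ*δ*δ*δ + (-41624548096:ℂ)*α*β*β*β + (-9659752712/3:ℂ)*α*β*β*β*δ + (2866733408:ℂ)*α*β*β*β*δ*δ + (2233833848/3:ℂ)*α*β*β*β*δ*δ*δ + (-33826967754592:ℂ)*α*α + (-14437390560576:ℂ)*α*α*δ + (2916219502240:ℂ)*α*α*δ*δ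 + (4338924738208/3:ℂ)*α*α*δ*δ*δ + (119624576640:ℂ)*α*α*δ*δ*δ*δ + (14953072080:ℂ)*α*α*δ*δ*δ*δ*δ + (-4334970220416:ℂ)*α*α*β + (-1326223469728:ℂ)*α*α*β*δ + (412771859936:ℂ)*α*α*β*δ*δ + (440605196120/3:ℂ)*α*α*β*δ*δ*δ + (5909242560:ℂ)*α*α*β*δ*δ*δ*δ + (738655320:ℂ)*α*α*β*δ*δ*δ*δ*δ + (-166498192384:ℂ)*α*α*β*β + (-38639010848/3:ℂ)*α*α*β*β*δ + (11466933632:ℂ)*α*α*β*β*δ*δ + (8935335392/3:ℂ)*α*α*β*β*δ*δ*δ + (-5153134565312:ℂ)*α*α*α + (-4168540108936/3:ℂ)*α*α*α*δ + (469120091520:ℂ)*α*α*α*δ*δ + (161504416464:ℂ)*α*α*α*δ*δ*δ + (5909242560:ℂ)*α*α*α*δ*δ*δ*δ + (738655320:ℂ)*α*α*α*δ*δ*δ*δ*δ + (-249747288576:ℂ)*α*α*α*β + (-19319505424:ℂ)*α*α*α*β*δ + (17200400448:ℂ)*α*α*α*β*δ*δ + (4467667696:ℂ)*α*α*α*β*δ*δ*δ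 + (-166498192384:ℂ)*α*α*α*α + (-38639010848/3:ℂ)*α*α*α*α*δ + (11466933632:ℂ)*α*α*α*α*δ*δ + (8935335392/3:ℂ)*α*α*α*α*δ*δ*δ) * hB + ((-211695722290112:ℂ) + (32664433183504/3:ℂ)*δ + (84992742673600/3:ℂ)*δ*δ + (10624092834200/3:ℂ)*δ*δ*δ + (-40364573323488:ℂ)*β + (3877852553192:ℂ)*β*δ + (18548900502400/3:ℂ)*β*δ*δ + (2318612562800/3:ℂ)*β*δ*δ*δ + (-49996286079200/3:ℂ)*α + (67400779660928:ℂ)*α*δ + (70744772117440/3:ℂ)*α*δ*δ + (8843096514680/3:ℂ)*α*δ*δ*δ + (-12872803221056/3:ℂ)*α*β + (38421969518792/3:ℂ)*α*β*δ + (13224880400960/3:ℂ)*α*β*δ*δ + (1653110050120/3:ℂ)*α*β*δ*δ*δ + (255833691595072/3:ℂ)*α*α + (144895170132640/3:ℂ)*α*α*δ + (21471491943040/3:ℂ)*α*α*δ*δ + (2683936492880/3:ℂ)*α*α*δ*δ*δ + (56705398289408/3:ℂ)*α*α*β + (27262153234136/3:ℂ)*α*α*β*δ + (3245891999360/3:ℂ)*α*α*β*δ*δ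 + (405736499920/3:ℂ)*α*α*β*δ*δ*δ + (103667476147360/3:ℂ)*α*α*α + (38013976927432/3:ℂ)*α*α*α*δ + (2781393029440/3:ℂ)*α*α*α*δ*δ + (347674128680/3:ℂ)*α*α*α*δ*δ*δ + (17058161960864/3:ℂ)*α*α*α*β + (5623315301528/3:ℂ)*α*α*α*β*δ + (298308273280/3:ℂ)*α*α*α*β*δ*δ + (37288534160/3:ℂ)*α*α*α*β*δ*δ*δ + (13038860785312/3:ℂ)*α*α*α*α + (3777205763696/3:ℂ)*α*α*α*α*δ + (126767051200/3:ℂ)*α*α*α*α*δ*δ + (15845881400/3:ℂ)*α*α*α*α*δ*δ*δ + (1096779903712/3:ℂ)*α*α*α*α*β + (93452715872:ℂ)*α*α*α*α*β*δ + (1969747520:ℂ)*α*α*α*α*β*δ*δ + (246218440:ℂ)*α*α*α*α*β*δ*δ*δ + (354247279072/3:ℂ)*α*α*α*α*α + (74931982168/3:ℂ)*α*α*α*α*α*δ + (4836480928:ℂ)*α*α*α*α*α*β + (2972489168/3:ℂ)*α*α*α*α*α*β*δ) * hD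

set_option maxHeartbeats 4000000 in
set_option maxRecDepth 16384 in
lemma p2Qx : eval ![((16+4*α+4*β)/12), ((3*δ+6)/12), 1] (pderiv 0 Qpoly) = ((-468:ℂ)*δ + (-24:ℂ)*β*δ + (-84:ℂ)*α*δ + (-24:ℂ)*α*β*δ) := by
  simp [F, A1C, A2C, A3C, A4C, A5C, A6C, A7C, A8C, Qpoly, x, y, z, pderiv_mul, pderiv_pow, pderiv_C, pd00, pd01, pd02, pd10, pd11, pd12, pdn2, pdn3, pdn4, pdn5, pdn6, pdn7, pdn8, Derivation.map_sub, Derivation.map_neg]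
  linear_combination ((48:ℂ) + (-6:ℂ)*β) * hA + ((54:ℂ) + (6:ℂ)*α) * hB + ((-234:ℂ) + (-12:ℂ)*β + (-42:ℂ)*α + (-12:ℂ)*α*β) * hD

set_option maxHeartbeats 4000000 in
set_option maxRecDepth 16384 in
lemma p2Qy : eval ![((16+4*α+4*β)/12), ((3*δ+6)/12), 1] (pderiv 1 Qpoly) = ((5920:ℂ) + (1200:ℂ)*β + (1568:ℂ)*α + (176:ℂ)*α*β) := by
  simp [F, A1C, A2C, A3C, A4C, A5C, A6C, A7C, A8C, Qpoly, x, y, z, pderiv_mul, pderiv_pow, pderiv_C, pd00, pd01, pd02, pd10, pd11, pd12, pdn2, pdn3, pdn4, pdn5, pdn6, pdn7, pdn8, Derivation.map_sub, Derivation.map_neg]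
  linear_combination ((-136:ℂ)*δ + (-16:ℂ)*β*δ) * hA + ((-16:ℂ)*δ + (-16:ℂ)*α*δ) * hB + (0:ℂ) * hD

set_option maxHeartbeats 4000000 in
set_option maxRecDepth 16384 in
lemma p2Qxne : (((-468:ℂ)*δ + (-24:ℂ)*β*δ + (-84:ℂ)*α*δ + (-24:ℂ)*α*β*δ) : ℂ) ≠ 0 := by
  intro h
  have h1 : (((-468:ℂ)*δ + (-24:ℂ)*β*δ + (-84:ℂ)*α*δ + (-24:ℂ)*α*β*δ) : ℂ) * ((-47/6912:ℂ)*δ + (-11/3456:ℂ)*β*δ + (7/6912:ℂ)*α*δ + (1/1152:ℂ)*α*β*δ) = 1 := by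
    linear_combination ((-259/192:ℂ) + (-35/72:ℂ)*β + (-49/64:ℂ)*α + (-7/72:ℂ)*α*β + (-5/48:ℂ)*α*α) * hA + ((11/144:ℂ)*δ*δ + (1/18:ℂ)*α*δ*δ + (-1/48:ℂ)*α*α*δ*δ) * hB + ((919/192:ℂ) + (119/72:ℂ)*β + (79/48:ℂ)*α + (-47/192:ℂ)*α*α + (-7/72:ℂ)*α*α*β + (-5/48:ℂ)*α*α*α) * hD
  rw [h, zero_mul] at h1; exact zero_ne_one h1

set_option maxHeartbeats 4000000 in
set_option maxRecDepth 16384 in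
lemma p2Cne : (((-26164927/8:ℂ) + (843332:ℂ)*δ + (-3040883/6:ℂ)*β + (784621/6:ℂ)*β*δ + (-19037749/24:ℂ)*α + (613612/3:ℂ)*α*δ + (-737531/6:ℂ)*α*β + (190309/6:ℂ)*α*β*δ) : ℂ) ≠ 0 := by
  intro h
  have h1 : (((-26164927/8:ℂ) + (843332:ℂ)*δ + (-3040883/6:ℂ)*β + (784621/6:ℂ)*β*δ + (-19037749/24:ℂ)*α + (613612/3:ℂ)*α*δ + (-737531/6:ℂ)*α*β + (190309/6:ℂ)*α*β*δ) : ℂ) * ((-20715287/52199424:ℂ) + (1408577/6524928:ℂ)*δ + (-5564179/13049856:ℂ)*β + (108990653/208797696:ℂ)*β*δ + (5017087/52199424:ℂ)*α + (-341401/6524928:ℂ)*α*δ + (449929/4349952:ℂ)*α*β + (-8811751/69599232:ℂ)*α*β*δ) = 1 := by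
    linear_combination ((-85444930947257/104398848:ℂ) + (190797801578665/417595392:ℂ)*δ + (-12091416962935/52199424:ℂ)*β + (656789493485225/5011144704:ℂ)*β*δ + (-54077770119325/208797696:ℂ)*α + (13114913559595/139198464:ℂ)*α*δ + (-4315133847595/156598272:ℂ)*α*β + (-8384777605295/417595392:ℂ)*α*α) * hA + ((16920017330057/78299136:ℂ) + (-401280170925143/1252786176:ℂ)*δ + (85516355147513/1252786176:ℂ)*δ*δ + (-48208/4779:ℂ)*α + (19273/4779:ℂ)*α*δ + (30217/152928:ℂ)*α*δ*δ + (-331836585299/26099712:ℂ)*α*α + (2622982711919/139198464:ℂ)*α*α*δ + (-1676955521059/417595392:ℂ)*α*α*δ*δ) * hB + ((224879987260229/139198464:ℂ) + (73357275409115/156598272:ℂ)*β + (142541291838367/417595392:ℂ)*α + (-13228241796085/139198464:ℂ)*α*α + (-4315133847595/156598272:ℂ)*α*α*β + (-8384777605295/417595392:ℂ)*α*α*α) * hD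
  rw [h, zero_mul] at h1; exact zero_ne_one h1

set_option maxHeartbeats 4000000 in
set_option maxRecDepth 16384 in
lemma p2XX : eval ![((16+4*α+4*β)/12), ((3*δ+6)/12), 1] (pderiv 0 (pderiv 0 F)) = 2 * (((-26164927/8:ℂ) + (843332:ℂ)*δ + (-3040883/6:ℂ)*β + (784621/6:ℂ)*β*δ + (-19037749/24:ℂ)*α + (613612/3:ℂ)*α*δ + (-737531/6:ℂ)*α*β + (190309/6:ℂ)*α*β*δ)) * (((-468:ℂ)*δ + (-24:ℂ)*β*δ + (-84:ℂ)*α*δ + (-24:ℂ)*α*β*δ) : ℂ)^2 := by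
  simp [F, A1C, A2C, A3C, A4C, A5C, A6C, A7C, A8C, Qpoly, x, y, z, pderiv_mul, pderiv_pow, pderiv_C, pd00, pd01, pd02, pd10, pd11, pd12, pdn2, pdn3, pdn4, pdn5, pdn6, pdn7, pdn8, Derivation.map_sub, Derivation.map_neg]
  linear_combination ((47391762813108:ℂ) + (18225738927408:ℂ)*δ + (9949661986572:ℂ)*β + (6881698291032:ℂ)*β*δ + (36045962469900:ℂ)*α + (15306170137728:ℂ)*α*δ + (7629346137360:ℂ)*α*β + (1774349569608:ℂ)*α*β*δ + (7813424037360:ℂ)*α*α + (691212177192:ℂ)*α*α*δ + (638335450176:ℂ)*α*α*β + (41960472792:ℂ)*α*α*β*δ + (129449259144:ℂ)*α*α*α + (-2457011520:ℂ)*α*α*α*δ + (8199996780:ℂ)*α*α*α*β + (-182696640:ℂ)*α*α*α*β*δ) * hA + ((-63461475646380:ℂ) + (-46667640538008:ℂ)*δ + (-2058630005412:ℂ)*δ*δ + (4539351745872:ℂ)*δ*δ*δ + (927878926284:ℂ)*δ*δ*δ*δ + (27420171480:ℂ)*δ*δ*δ*δ*δ + (2742017148:ℂ)*δ*δ*δ*δ*δ*δ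 + (-10468219189608:ℂ)*β + (-1092665850768:ℂ)*β*δ + (825423073656:ℂ)*β*δ*δ + (165614071344:ℂ)*β*δ*δ*δ + (28145413008:ℂ)*β*δ*δ*δ*δ + (-36328145706396:ℂ)*α + (-13503897587448:ℂ)*α*δ + (1184825720268:ℂ)*α*δ*δ + (1423629505584:ℂ)*α*δ*δ*δ + (281331015948:ℂ)*α*δ*δ*δ*δ + (6647897880:ℂ)*α*δ*δ*δ*δ*δ + (664789788:ℂ)*α*δ*δ*δ*δ*δ*δ + (-2538923760936:ℂ)*α*β + (-265013085456:ℂ)*α*β*δ + (201369663288:ℂ)*α*β*δ*δ + (39871175472:ℂ)*α*β*δ*δ*δ + (6827177232:ℂ)*α*β*δ*δ*δ*δ + (-5077847521872:ℂ)*α*α + (-530026170912:ℂ)*α*α*δ + (416316910464:ℂ)*α*α*δ*δ + (76239906336:ℂ)*α*α*δ*δ*δ + (13654354464:ℂ)*α*α*δ*δ*δ*δ + (867061440:ℂ)*α*α*β*δ*δ + (-223725888:ℂ)*α*α*β*δ*δ*δ + (1905053616:ℂ)*α*α*α*δ*δ + (-491402304:ℂ)*α*α*α*δ*δ*δ + (141605952:ℂ)*α*α*α*β*δ*δ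 + (-36539328:ℂ)*α*α*α*β*δ*δ*δ) * hB + ((56968781673732:ℂ) + (76642759213416:ℂ)*δ + (18859558498056:ℂ)*δ*δ + (1283228753400:ℂ)*δ*δ*δ + (128322875340:ℂ)*δ*δ*δ*δ + (-2620836611316:ℂ)*β + (23410835204880:ℂ)*β*δ + (5352238469328:ℂ)*β*δ*δ + (286531974000:ℂ)*β*δ*δ*δ + (28653197400:ℂ)*β*δ*δ*δ*δ + (65091864909612:ℂ)*α + (73210705143000:ℂ)*α*δ + (15495179149596:ℂ)*α*δ*δ + (625135858560:ℂ)*α*δ*δ*δ + (62513585856:ℂ)*α*δ*δ*δ*δ + (18820131630060:ℂ)*α*β + (12473761673688:ℂ)*α*β*δ + (2590647937044:ℂ)*α*β*δ*δ + (96906227400:ℂ)*α*β*δ*δ*δ + (9690622740:ℂ)*α*β*δ*δ*δ*δ + (39782264048904:ℂ)*α*α + (16190171860248:ℂ)*α*α*δ + (3143207694348:ℂ)*α*α*δ*δ + (76133953800:ℂ)*α*α*δ*δ*δ + (7613395380:ℂ)*α*α*δ*δ*δ*δ + (7042192621656:ℂ)*α*α*β + (1828098717984:ℂ)*α*α*β*δ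 + (344374884144:ℂ)*α*α*β*δ*δ + (6647897880:ℂ)*α*α*β*δ*δ*δ + (664789788:ℂ)*α*α*β*δ*δ*δ*δ + (7166177741640:ℂ)*α*α*α + (703497234792:ℂ)*α*α*α*δ + (119923991064:ℂ)*α*α*α*δ*δ + (597335466276:ℂ)*α*α*α*β + (42873955992:ℂ)*α*α*α*β*δ + (7491967020:ℂ)*α*α*α*β*δ*δ + (129449259144:ℂ)*α*α*α*α + (-2457011520:ℂ)*α*α*α*α*δ + (8199996780:ℂ)*α*α*α*α*β + (-182696640:ℂ)*α*α*α*α*β*δ) * hD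

set_option maxHeartbeats 4000000 in
set_option maxRecDepth 16384 in
lemma p2XY : eval ![((16+4*α+4*β)/12), ((3*δ+6)/12), 1] (pderiv 1 (pderiv 0 F)) = 2 * (((-26164927/8:ℂ) + (843332:ℂ)*δ + (-3040883/6:ℂ)*β + (784621/6:ℂ)*β*δ + (-19037749/24:ℂ)*α + (613612/3:ℂ)*α*δ + (-737531/6:ℂ)*α*β + (190309/6:ℂ)*α*β*δ)) * (((-468:ℂ)*δ + (-24:ℂ)*β*δ + (-84:ℂ)*α*δ + (-24:ℂ)*α*β*δ) : ℂ) * (((5920:ℂ) + (1200:ℂ)*β + (1568:ℂ)*α + (176:ℂ)*α*β) : ℂ) := by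
  simp [F, A1C, A2C, A3C, A4C, A5C, A6C, A7C, A8C, Qpoly, x, y, z, pderiv_mul, pderiv_pow, pderiv_C, pd00, pd01, pd02, pd10, pd11, pd12, pdn2, pdn3, pdn4, pdn5, pdn6, pdn7, pdn8, Derivation.map_sub, Derivation.map_neg]
  linear_combination ((83535385652672:ℂ) + (56721289609616:ℂ)*δ + (15874308278176:ℂ)*β + (8017701410816:ℂ)*β*δ + (78207980429760:ℂ)*α + (35154119629680:ℂ)*α*δ + (17258810199360:ℂ)*α*β + (8269331674680:ℂ)*α*β*δ + (22520106548416:ℂ)*α*α + (8562619487808:ℂ)*α*α*δ + (2524485378496:ℂ)*α*α*β + (749872177872:ℂ)*α*α*β*δ + (1054844473408:ℂ)*α*α*α + (228125540512:ℂ)*α*α*α*δ + (53468303936:ℂ)*α*α*α*β + (11151301352:ℂ)*α*α*α*β*δ) * hA + ((-132304517191552:ℂ) + (-86387161074208:ℂ)*δ + (8419539998912:ℂ)*δ*δ + (7807332720896:ℂ)*δ*δ*δ + (1056567093120:ℂ)*δ*δ*δ*δ + (132070886640:ℂ)*δ*δ*δ*δ*δ + (-38309169821568:ℂ)*β + (-15249305208520:ℂ)*β*δ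 + (4058717151168:ℂ)*β*δ*δ + (1542815783472:ℂ)*β*δ*δ*δ + (73120457280:ℂ)*β*δ*δ*δ*δ + (9140057160:ℂ)*β*δ*δ*δ*δ*δ + (-2059448681472:ℂ)*β*β + (-159316771104:ℂ)*β*β*δ + (141821510784:ℂ)*β*β*δ*δ + (36836604128:ℂ)*β*β*δ*δ*δ + (-132289845740032:ℂ)*α + (-53800214703120:ℂ)*α*δ + (11919168590528:ℂ)*α*δ*δ + (5400945660096:ℂ)*α*δ*δ*δ + (402447974400:ℂ)*α*δ*δ*δ*δ + (50305996800:ℂ)*α*δ*δ*δ*δ*δ + (-15469715462016:ℂ)*α*β + (-4209901139944:ℂ)*α*β*δ + (1418510919232:ℂ)*α*β*δ*δ + (484690933072:ℂ)*α*β*δ*δ*δ + (17727727680:ℂ)*α*β*δ*δ*δ*δ + (2215965960:ℂ)*α*β*δ*δ*δ*δ*δ + (-499494577152:ℂ)*α*β*β + (-38639010848:ℂ)*α*β*β*δ + (34400800896:ℂ)*α*β*β*δ*δ + (8935335392:ℂ)*α*β*β*δ*δ*δ + (-30480783187584:ℂ)*α*α + (-8525566040432:ℂ)*α*α*δ + (2841900480704:ℂ)*α*α*δ*δ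 + (961186425952:ℂ)*α*α*δ*δ*δ + (35455455360:ℂ)*α*α*δ*δ*δ*δ + (4431931920:ℂ)*α*α*δ*δ*δ*δ*δ + (-1498483731456:ℂ)*α*α*β + (-128317337056:ℂ)*α*α*β*δ + (106402070528:ℂ)*α*α*β*δ*δ + (26806006176:ℂ)*α*α*β*δ*δ*δ + (-1498483731456:ℂ)*α*α*α + (-135504461824:ℂ)*α*α*α*δ + (108255412928:ℂ)*α*α*α*δ*δ + (26806006176:ℂ)*α*α*α*δ*δ*δ + (-1038443648:ℂ)*α*α*α*β*δ + (267955072:ℂ)*α*α*α*β*δ*δ) * hB + ((88572358545792:ℂ) + (130081695150336:ℂ)*δ + (29733563913600:ℂ)*δ*δ + (3716695489200:ℂ)*δ*δ*δ + (-14829172505568:ℂ)*β + (19375976852320:ℂ)*β*δ + (6478284398400:ℂ)*β*δ*δ + (809785549800:ℂ)*β*δ*δ*δ + (266521269932224:ℂ)*α + (146595526946928:ℂ)*α*δ + (19337234221440:ℂ)*α*δ*δ + (2417154277680:ℂ)*α*δ*δ*δ + (68134676357600:ℂ)*α*β + (32180412680128:ℂ)*α*β*δ + (3464780645760:ℂ)*α*β*δ*δ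 + (433097580720:ℂ)*α*β*δ*δ*δ + (156782617095168:ℂ)*α*α + (58447529514736:ℂ)*α*α*δ + (4143489776640:ℂ)*α*α*δ*δ + (517936222080:ℂ)*α*α*δ*δ*δ + (27854344453376:ℂ)*α*α*β + (9518196939808:ℂ)*α*α*β*δ + (532351393920:ℂ)*α*α*β*δ*δ + (66543924240:ℂ)*α*α*β*δ*δ*δ + (27960528260864:ℂ)*α*α*α + (8348777683616:ℂ)*α*α*α*δ + (291662515200:ℂ)*α*α*α*δ*δ + (36457814400:ℂ)*α*α*α*δ*δ*δ + (2756638435968:ℂ)*α*α*α*β + (737946900200:ℂ)*α*α*α*β*δ + (17727727680:ℂ)*α*α*α*β*δ*δ + (2215965960:ℂ)*α*α*α*β*δ*δ*δ + (1054844473408:ℂ)*α*α*α*α + (228125540512:ℂ)*α*α*α*α*δ + (53468303936:ℂ)*α*α*α*α*β + (11151301352:ℂ)*α*α*α*α*β*δ) * hD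

set_option maxHeartbeats 4000000 in
set_option maxRecDepth 16384 in
lemma p2YY : eval ![((16+4*α+4*β)/12), ((3*δ+6)/12), 1] (pderiv 1 (pderiv 1 F)) = 2 * (((-26164927/8:ℂ) + (843332:ℂ)*δ + (-3040883/6:ℂ)*β + (784621/6:ℂ)*β*δ + (-19037749/24:ℂ)*α + (613612/3:ℂ)*α*δ + (-737531/6:ℂ)*α*β + (190309/6:ℂ)*α*β*δ)) * (((5920:ℂ) + (1200:ℂ)*β + (1568:ℂ)*α + (176:ℂ)*α*β) : ℂ)^2 := by
  simp [F, A1C, A2C, A3C, A4C, A5C, A6C, A7C, A8C, Qpoly, x, y, z, pderiv_mul, pderiv_pow, pderiv_C, pd00, pd01, pd02, pd10, pd11, pd12, pdn2, pdn3, pdn4, pdn5, pdn6, pdn7, pdn8, Derivation.map_sub, Derivation.map_neg]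
  linear_combination ((-108691211814080:ℂ) + (193206541151104/3:ℂ)*δ + (-39901026467648/3:ℂ)*β + (12800868249472:ℂ)*β*δ + (244384378563200/3:ℂ)*α + (194174207004416/3:ℂ)*α*δ + (17189285156416:ℂ)*α*β + (13684450685952:ℂ)*α*β*δ + (154652153815616/3:ℂ)*α*α + (45600724999424/3:ℂ)*α*α*δ + (29663758923712/3:ℂ)*α*α*β + (5284808573824/3:ℂ)*α*α*β*δ + (24900581894720/3:ℂ)*α*α*α + (774918474496:ℂ)*α*α*α*δ + (726030888320:ℂ)*α*α*α*β + (33763363200:ℂ)*α*α*α*β*δ + (708494558144/3:ℂ)*α*α*α*α + (9672961856:ℂ)*α*α*α*α*β) * hA + ((-15420425794880/3:ℂ) + (-171944340159360:ℂ)*δ + (-20402638599168:ℂ)*δ*δ + (14272737027840:ℂ)*δ*δ*δ + (2378789504640:ℂ)*δ*δ*δ*δ + (-142952167330304/3:ℂ)*β + (-69067442616704/3:ℂ)*β*δ + (2382877671872:ℂ)*β*δ*δ + (1798731896320:ℂ)*β*δ*δ*δ + (899365948160/3:ℂ)*β*δ*δ*δ*δ + (-10488309087552:ℂ)*β*β +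 (-1008211910912/3:ℂ)*β*β*δ + (979424795968:ℂ)*β*β*δ*δ + (97493943040:ℂ)*β*β*δ*δ*δ + (48746971520/3:ℂ)*β*β*δ*δ*δ*δ + (-1051823963648/3:ℂ)*β*β*β + (41748931200:ℂ)*β*β*β*δ + (23636918464:ℂ)*β*β*β*δ*δ + (-211013937315712:ℂ)*α + (-279203996615552/3:ℂ)*α*δ + (11041082351424:ℂ)*α*δ*δ + (8174852848640:ℂ)*α*δ*δ*δ + (4087426424320/3:ℂ)*α*δ*δ*δ*δ + (-46608588780288:ℂ)*α*β + (-18672958721792/3:ℂ)*α*β*δ + (3786769871104:ℂ)*α*β*δ*δ + (728639123200:ℂ)*α*β*δ*δ*δ + (364319561600/3:ℂ)*α*β*δ*δ*δ*δ + (-3946228413248:ℂ)*α*β*β + (85497706240:ℂ)*α*β*β*δ + (332087209536:ℂ)*α*β*β*δ*δ + (23636970240:ℂ)*α*β*β*δ*δ*δ + (3939495040:ℂ)*α*β*β*δ*δ*δ*δ + (-255109451264/3:ℂ)*α*β*β*β + (10126392960:ℂ)*α*β*β*β*δ + (5733466816:ℂ)*α*β*β*β*δ*δ + (-286129620299392/3:ℂ)*α*α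 + (-12019631965184:ℂ)*α*α*δ + (7746432230720:ℂ)*α*α*δ*δ + (1435494919680:ℂ)*α*α*δ*δ*δ + (239249153280:ℂ)*α*α*δ*δ*δ*δ + (-10573542656000:ℂ)*α*α*β + (261170778752/3:ℂ)*α*α*β*δ + (920091600832:ℂ)*α*α*β*δ*δ + (70910910720:ℂ)*α*α*β*δ*δ*δ + (11818485120:ℂ)*α*α*β*δ*δ*δ*δ + (-1020437805056/3:ℂ)*α*α*β*β + (40505571840:ℂ)*α*α*β*β*δ + (22933867264:ℂ)*α*α*β*β*δ*δ + (-36586243578688/3:ℂ)*α*α*α + (819937400576/3:ℂ)*α*α*α*δ + (1032788064000:ℂ)*α*α*α*δ*δ + (70910910720:ℂ)*α*α*α*δ*δ*δ + (11818485120:ℂ)*α*α*α*δ*δ*δ*δ + (-1507810947328/3:ℂ)*α*α*α*β + (176380061696/3:ℂ)*α*α*α*β*δ + (34400800896:ℂ)*α*α*α*β*δ*δ + (-1020437805056/3:ℂ)*α*α*α*α + (40505571840:ℂ)*α*α*α*α*δ + (22933867264:ℂ)*α*α*α*α*δ*δ) * hB + ((89709549036928/3:ℂ) + (339970970694400:ℂ)*δ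 + (169985485347200/3:ℂ)*δ*δ + (54594968097472/3:ℂ)*β + (74195602009600:ℂ)*β*δ + (37097801004800/3:ℂ)*β*δ*δ + (343974593906880:ℂ)*α + (282979088469760:ℂ)*α*δ + (141489544234880/3:ℂ)*α*δ*δ + (185852479973248/3:ℂ)*α*β + (52899521603840:ℂ)*α*β*δ + (26449760801920/3:ℂ)*α*β*δ*δ + (285070418092928:ℂ)*α*α + (85885967772160:ℂ)*α*α*δ + (42942983886080/3:ℂ)*α*α*δ*δ + (55115022856192:ℂ)*α*α*β + (12983567997440:ℂ)*α*α*β*δ + (6491783998720/3:ℂ)*α*α*β*δ*δ + (83945746921920:ℂ)*α*α*α + (11125572117760:ℂ)*α*α*α*δ + (5562786058880/3:ℂ)*α*α*α*δ*δ + (38889256294208/3:ℂ)*α*α*α*β + (1193233093120:ℂ)*α*α*α*β*δ + (596616546560/3:ℂ)*α*α*α*β*δ*δ + (9368664796608:ℂ)*α*α*α*α + (507068204800:ℂ)*α*α*α*α*δ + (253534102400/3:ℂ)*α*α*α*α*δ*δ + (2288107688384/3:ℂ)*α*α*α*α*β + (23636970240:ℂ)*α*α*α*α*β*δ + (3939495040:ℂ)*α*α*α*α*β*δ*δ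 + (708494558144/3:ℂ)*α*α*α*α*α + (9672961856:ℂ)*α*α*α*α*α*β) * hD

lemma tacP2 : TacnodeTangentToQAt ((16+4*α+4*β)/12) ((3*δ+6)/12) := by
  refine ⟨p2F, p2Fx, p2Fy, fun h => p2Qxne (by rw [← p2Qx]; exact h.1), ((-26164927/8:ℂ) + (843332:ℂ)*δ + (-3040883/6:ℂ)*β + (784621/6:ℂ)*β*δ + (-19037749/24:ℂ)*α + (613612/3:ℂ)*α*δ + (-737531/6:ℂ)*α*β + (190309/6:ℂ)*α*β*δ), p2Cne, ?_, ?_, ?_⟩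
  · rw [p2Qx]; exact p2XX
  · rw [p2Qx, p2Qy]; exact p2XY
  · rw [p2Qy]; exact p2YY

set_option maxHeartbeats 4000000 in
set_option maxRecDepth 16384 in
lemma p3F : eval ![((16+4*α+4*β)/12), ((3*δ-6)/12), 1] F = 0 := by
  simp [F, A1C, A2C, A3C, A4C, A5C, A6C, A7C, A8C, Qpoly, x, y, z, pderiv_mul, pderiv_pow, pderiv_C, pd00, pd01, pd02, pd10, pd11, pd12, pdn2, pdn3, pdn4, pdn5, pdn6, pdn7, pdn8, Derivation.map_sub, Derivation.map_neg]
  linear_combination ((-6166929716247:ℂ) + (21254179495112/3:ℂ)*δ + (2451591412748/3:ℂ)*β + (-1208250896756/3:ℂ)*β*δ + (35144058396811/3:ℂ)*α + (-20850122665916/3:ℂ)*α*δ + (8002249574462/3:ℂ)*α*β + (-2738979232324/3:ℂ)*α*β*δ + (27534498490258/3:ℂ)*α*α + (-10638455538956/3:ℂ)*α*α*δ + (1588895853164:ℂ)*α*α*β + (-2234982306140/3:ℂ)*α*α*β*δ + (6447043562662/3:ℂ)*α*α*α + (-1754447742868/3:ℂ)*α*α*α*δ + (940002109328/3:ℂ)*α*α*α*β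 + (-134339579572/3:ℂ)*α*α*α*β*δ + (534401249363/3:ℂ)*α*α*α*α + (-37465991084/3:ℂ)*α*α*α*α*δ + (31292053952/3:ℂ)*α*α*α*α*β + (-1486244584/3:ℂ)*α*α*α*α*β*δ + (5808470959/3:ℂ)*α*α*α*α*α + (75525526:ℂ)*α*α*α*α*α*β) * hA + ((8054450497737:ℂ) + (-23030261479424/3:ℂ)*δ + (-2482075261908:ℂ)*δ*δ + (4677001817092/3:ℂ)*δ*δ*δ + (41586838079/3:ℂ)*δ*δ*δ*δ + (-74337172020:ℂ)*δ*δ*δ*δ*δ + (7433717202:ℂ)*δ*δ*δ*δ*δ*δ + (536322409954:ℂ)*β + (2474102276472:ℂ)*β*δ + (-685902253140:ℂ)*β*δ*δ + (-703825331452/3:ℂ)*β*δ*δ*δ + (83714870920:ℂ)*β*δ*δ*δ*δ + (-28105185880/3:ℂ)*β*δ*δ*δ*δ*δ + (2810518588/3:ℂ)*β*δ*δ*δ*δ*δ*δ + (-1649785411919/3:ℂ)*β*β + (798948722644:ℂ)*β*β*δ + (-263652532832/3:ℂ)*β*β*δ*δ + (-222860425384/3:ℂ)*β*β*δ*δ*δ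 + (46504965349/3:ℂ)*β*β*δ*δ*δ*δ + (-1523342860/3:ℂ)*β*β*δ*δ*δ*δ*δ + (152334286/3:ℂ)*β*β*δ*δ*δ*δ*δ*δ + (-290783866378/3:ℂ)*β*β*β + (10117276396:ℂ)*β*β*β*δ + (22912200670/3:ℂ)*β*β*β*δ*δ + (-4604575516/3:ℂ)*β*β*β*δ*δ*δ + (260605676:ℂ)*β*β*β*δ*δ*δ*δ + (-9925155211420/3:ℂ)*α + (36716898205228/3:ℂ)*α*δ + (-8931574342820/3:ℂ)*α*δ*δ + (-942355965516:ℂ)*α*δ*δ*δ + (1045178365436/3:ℂ)*α*δ*δ*δ*δ + (-127732075760/3:ℂ)*α*δ*δ*δ*δ*δ + (12773207576/3:ℂ)*α*δ*δ*δ*δ*δ*δ + (-7888906578112/3:ℂ)*α*β + (9338267810144/3:ℂ)*α*β*δ + (-342546058336:ℂ)*α*β*δ*δ + (-892015779328/3:ℂ)*α*β*δ*δ*δ + (209375610796/3:ℂ)*α*β*δ*δ*δ*δ + (-11384986300/3:ℂ)*α*β*δ*δ*δ*δ*δ + (1138498630/3:ℂ)*α*β*δ*δ*δ*δ*δ*δ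 + (-521089827125:ℂ)*α*β*β + (234242660452:ℂ)*α*β*β*δ + (27706338328/3:ℂ)*α*β*β*δ*δ + (-72471008984/3:ℂ)*α*β*β*δ*δ*δ + (14406200237/3:ℂ)*α*β*β*δ*δ*δ*δ + (-123109220:ℂ)*α*β*β*δ*δ*δ*δ*δ + (12310922:ℂ)*α*β*β*δ*δ*δ*δ*δ*δ + (-23508553342:ℂ)*α*β*β*β + (7361474596/3:ℂ)*α*β*β*β*δ + (5557232174/3:ℂ)*α*β*β*β*δ*δ + (-1116916924/3:ℂ)*α*β*β*β*δ*δ*δ + (63214604:ℂ)*α*β*β*β*δ*δ*δ*δ + (-20221197065377/3:ℂ)*α*α + (6214951804576:ℂ)*α*α*δ + (-1617461163070/3:ℂ)*α*α*δ*δ + (-1810588639184/3:ℂ)*α*α*δ*δ*δ + (140442529557:ℂ)*α*α*δ*δ*δ*δ + (-7476536040:ℂ)*α*α*δ*δ*δ*δ*δ + (747653604:ℂ)*α*α*δ*δ*δ*δ*δ*δ + (-3752694381634/3:ℂ)*α*α*β + (670122964400:ℂ)*α*α*β*δ + (9281005648/3:ℂ)*α*α*β*δ*δ + (-202574870380/3:ℂ)*α*α*β*δ*δ*δ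 + (13566406084:ℂ)*α*α*β*δ*δ*δ*δ + (-369327660:ℂ)*α*α*β*δ*δ*δ*δ*δ + (36932766:ℂ)*α*α*β*δ*δ*δ*δ*δ*δ + (-94034213368:ℂ)*α*α*β*β + (29445898384/3:ℂ)*α*α*β*β*δ + (22228928696/3:ℂ)*α*α*β*β*δ*δ + (-4467667696/3:ℂ)*α*α*β*β*δ*δ*δ + (252858416:ℂ)*α*α*β*β*δ*δ*δ*δ + (-5138933220562/3:ℂ)*α*α*α + (2155064456324/3:ℂ)*α*α*α*δ + (118513154546/3:ℂ)*α*α*α*δ*δ + (-74842965672:ℂ)*α*α*α*δ*δ*δ + (14808947558:ℂ)*α*α*α*δ*δ*δ*δ + (-369327660:ℂ)*α*α*α*δ*δ*δ*δ*δ + (36932766:ℂ)*α*α*α*δ*δ*δ*δ*δ*δ + (-141051320052:ℂ)*α*α*α*β + (14722949192:ℂ)*α*α*α*β*δ + (11114464348:ℂ)*α*α*α*β*δ*δ + (-2233833848:ℂ)*α*α*α*β*δ*δ*δ + (379287624:ℂ)*α*α*α*β*δ*δ*δ*δ + (-94034213368:ℂ)*α*α*α*α + (29445898384/3:ℂ)*α*α*α*α*δ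 + (22228928696/3:ℂ)*α*α*α*α*δ*δ + (-4467667696/3:ℂ)*α*α*α*α*δ*δ*δ + (252858416:ℂ)*α*α*α*α*δ*δ*δ*δ) * hB + ((-66698053032695/3:ℂ) + (68660526081848/3:ℂ)*δ + (4058487448129/3:ℂ)*δ*δ + (-5312046417100/3:ℂ)*δ*δ*δ + (531204641710/3:ℂ)*δ*δ*δ*δ + (-43248157075892/3:ℂ)*β + (12732121672612/3:ℂ)*β*δ + (1266454772056/3:ℂ)*β*δ*δ + (-1159306281400/3:ℂ)*β*δ*δ*δ + (115930628140/3:ℂ)*β*δ*δ*δ*δ + (-39747868786212:ℂ)*α + (-30356397373952/3:ℂ)*α*δ + (6785895268261:ℂ)*α*δ*δ + (-4421548257340/3:ℂ)*α*δ*δ*δ + (442154825734/3:ℂ)*α*δ*δ*δ*δ + (-13696864522622/3:ℂ)*α*β + (-5986104358436/3:ℂ)*α*β*δ + (3922965880100/3:ℂ)*α*β*δ*δ + (-826555025060/3:ℂ)*α*β*δ*δ*δ + (82655502506/3:ℂ)*α*β*δ*δ*δ*δ + (7540948376324/3:ℂ)*α*α + (-50976093123280/3:ℂ)*α*α*δ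 + (13843194142037/3:ℂ)*α*α*δ*δ + (-1341968246440/3:ℂ)*α*α*δ*δ*δ + (134196824644/3:ℂ)*α*α*δ*δ*δ*δ + (3736142354716/3:ℂ)*α*α*β + (-10385184617708/3:ℂ)*α*α*β*δ + (859092842240:ℂ)*α*α*β*δ*δ + (-202868249960/3:ℂ)*α*α*β*δ*δ*δ + (20286824996/3:ℂ)*α*α*β*δ*δ*δ*δ + (23155756878374/3:ℂ)*α*α*α + (-16225595434276/3:ℂ)*α*α*α*δ + (3476947379743/3:ℂ)*α*α*α*δ*δ + (-173837064340/3:ℂ)*α*α*α*δ*δ*δ + (17383706434/3:ℂ)*α*α*α*δ*δ*δ*δ + (1375630757060:ℂ)*α*α*α*β + (-837783125828:ℂ)*α*α*α*β*δ + (168433676416:ℂ)*α*α*α*β*δ*δ + (-18644267080/3:ℂ)*α*α*α*β*δ*δ*δ + (1864426708/3:ℂ)*α*α*α*β*δ*δ*δ*δ + (1895659706562:ℂ)*α*α*α*α + (-587278610216:ℂ)*α*α*α*α*δ + (109774287493:ℂ)*α*α*α*α*δ*δ + (-7922940700/3:ℂ)*α*α*α*α*δ*δ*δ + (792294070/3:ℂ)*α*α*α*α*δ*δ*δ*δ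 + (855880112218/3:ℂ)*α*α*α*α*β + (-44756610416:ℂ)*α*α*α*α*β*δ + (7823018666:ℂ)*α*α*α*α*β*δ*δ + (-123109220:ℂ)*α*α*α*α*β*δ*δ*δ + (12310922:ℂ)*α*α*α*α*β*δ*δ*δ*δ + (168452964856:ℂ)*α*α*α*α*α + (-37465991084/3:ℂ)*α*α*α*α*α*δ + (5808470959/3:ℂ)*α*α*α*α*α*δ*δ + (30159171062/3:ℂ)*α*α*α*α*α*β + (-1486244584/3:ℂ)*α*α*α*α*α*β*δ + (75525526:ℂ)*α*α*α*α*α*β*δ*δ + (5808470959/3:ℂ)*α*α*α*α*α*α + (75525526:ℂ)*α*α*α*α*α*α*β) * hD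

set_option maxHeartbeats 4000000 in
set_option maxRecDepth 16384 in
lemma p3Fx : eval ![((16+4*α+4*β)/12), ((3*δ-6)/12), 1] (pderiv 0 F) = 0 := by
  simp [F, A1C, A2C, A3C, A4C, A5C, A6C, A7C, A8C, Qpoly, x, y, z, pderiv_mul, pderiv_pow, pderiv_C, pd00, pd01, pd02, pd10, pd11, pd12, pdn2, pdn3, pdn4, pdn5, pdn6, pdn7, pdn8, Derivation.map_sub, Derivation.map_neg]
  linear_combination ((23930905989500:ℂ) + (-17377439203144:ℂ)*δ + (3835985775432:ℂ)*β + (-1051316840696:ℂ)*β*δ + (30473718199820:ℂ)*α + (-12041883645992:ℂ)*α*δ + (5730685614990:ℂ)*α*β + (-3343307001732:ℂ)*α*β*δ + (11026134781400:ℂ)*α*α + (-3821397497008:ℂ)*α*α*δ + (1920317087014:ℂ)*α*α*β + (-349678077416:ℂ)*α*α*β*δ + (1396303217724:ℂ)*α*α*α + (-114062770256:ℂ)*α*α*α*δ + (94156250906:ℂ)*α*α*α*β + (-5575650676:ℂ)*α*α*α*β*δ + (18094722036:ℂ)*α*α*α*α + (869373546:ℂ)*α*α*α*α*β) * hA + ((-7536657784500:ℂ)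 + (30318353285312:ℂ)*δ + (-5807408314024:ℂ)*δ*δ + (-2847099267328:ℂ)*δ*δ*δ + (802588880540:ℂ)*δ*δ*δ*δ + (-66035443320:ℂ)*δ*δ*δ*δ*δ + (6603544332:ℂ)*δ*δ*δ*δ*δ*δ + (-6825208359748:ℂ)*β + (7386339032420:ℂ)*β*δ + (-643147726042:ℂ)*β*δ*δ + (-698287434456:ℂ)*β*δ*δ*δ + (144558759936:ℂ)*β*δ*δ*δ*δ + (-4570028580:ℂ)*β*δ*δ*δ*δ*δ + (457002858:ℂ)*β*δ*δ*δ*δ*δ*δ + (-1163135465512:ℂ)*β*β + (121407316752:ℂ)*β*β*δ + (91648802680:ℂ)*β*β*δ*δ + (-18418302064:ℂ)*β*β*δ*δ*δ + (3127268112:ℂ)*β*β*δ*δ*δ*δ + (-28797439593792:ℂ)*α + (23516192180376:ℂ)*α*δ + (-1645276822444:ℂ)*α*δ*δ + (-2298024855648:ℂ)*α*δ*δ*δ + (519579415760:ℂ)*α*δ*δ*δ*δ + (-25152998400:ℂ)*α*δ*δ*δ*δ*δ + (2515299840:ℂ)*α*δ*δ*δ*δ*δ*δ + (-5144769279772:ℂ)*α*β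 + (2155672495348:ℂ)*α*β*δ + (118968048798:ℂ)*α*β*δ*δ + (-224617738856:ℂ)*α*β*δ*δ*δ + (44441901360:ℂ)*α*β*δ*δ*δ*δ + (-1107982980:ℂ)*α*β*δ*δ*δ*δ*δ + (110798298:ℂ)*α*β*δ*δ*δ*δ*δ*δ + (-282102640104:ℂ)*α*β*β + (29445898384:ℂ)*α*β*β*δ + (22228928696:ℂ)*α*β*β*δ*δ + (-4467667696:ℂ)*α*β*β*δ*δ*δ + (758575248:ℂ)*α*β*β*δ*δ*δ*δ + (-10030488706116:ℂ)*α*α + (4284306737480:ℂ)*α*α*δ + (217530468292:ℂ)*α*α*δ*δ + (-445137757616:ℂ)*α*α*δ*δ*δ + (88188077220:ℂ)*α*α*δ*δ*δ*δ + (-2215965960:ℂ)*α*α*δ*δ*δ*δ*δ + (221596596:ℂ)*α*α*δ*δ*δ*δ*δ*δ + (-846307920312:ℂ)*α*α*β + (88337695152:ℂ)*α*α*β*δ + (66686786088:ℂ)*α*α*β*δ*δ + (-13403003088:ℂ)*α*α*β*δ*δ*δ + (2275725744:ℂ)*α*α*β*δ*δ*δ*δ + (-846307920312:ℂ)*α*α*α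 + (88337695152:ℂ)*α*α*α*δ + (66686786088:ℂ)*α*α*α*δ*δ + (-13403003088:ℂ)*α*α*α*δ*δ*δ + (2275725744:ℂ)*α*α*α*δ*δ*δ*δ) * hB + ((-73508033342748:ℂ) + (-35307283661568:ℂ)*δ + (13114210487940:ℂ)*δ*δ + (-1858347744600:ℂ)*δ*δ*δ + (185834774460:ℂ)*δ*δ*δ*δ + (-4211149300312:ℂ)*β + (-3209704027760:ℂ)*β*δ + (2091910690088:ℂ)*β*δ*δ + (-404892774900:ℂ)*β*δ*δ*δ + (40489277490:ℂ)*β*δ*δ*δ*δ + (17659462036724:ℂ)*α + (-53960529252024:ℂ)*α*δ + (14159267259584:ℂ)*α*δ*δ + (-1208577138840:ℂ)*α*δ*δ*δ + (120857713884:ℂ)*α*δ*δ*δ*δ + (727686250606:ℂ)*α*β + (-12625425694304:ℂ)*α*β*δ + (3066117797732:ℂ)*α*β*δ*δ + (-216548790360:ℂ)*α*β*δ*δ*δ + (21654879036:ℂ)*α*β*δ*δ*δ*δ + (29899989455724:ℂ)*α*α + (-25080274980728:ℂ)*α*α*δ + (5400112576508:ℂ)*α*α*δ*δ + (-258968111040:ℂ)*α*α*δ*δ*δ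 + (25896811104:ℂ)*α*α*δ*δ*δ*δ + (6126786680292:ℂ)*α*α*β + (-4226747075984:ℂ)*α*α*β*δ + (866528882816:ℂ)*α*α*β*δ*δ + (-33271962120:ℂ)*α*α*β*δ*δ*δ + (3327196212:ℂ)*α*α*β*δ*δ*δ*δ + (10240759413216:ℂ)*α*α*α + (-3882726326608:ℂ)*α*α*α*δ + (738525931668:ℂ)*α*α*α*δ*δ + (-18228907200:ℂ)*α*α*α*δ*δ*δ + (1822890720:ℂ)*α*α*α*δ*δ*δ*δ + (1738593460956:ℂ)*α*α*α*β + (-351245722420:ℂ)*α*α*α*β*δ + (63233586750:ℂ)*α*α*α*β*δ*δ + (-1107982980:ℂ)*α*α*α*β*δ*δ*δ + (110798298:ℂ)*α*α*α*β*δ*δ*δ*δ + (1305829607544:ℂ)*α*α*α*α + (-114062770256:ℂ)*α*α*α*α*δ + (18094722036:ℂ)*α*α*α*α*δ*δ + (89809383176:ℂ)*α*α*α*α*β + (-5575650676:ℂ)*α*α*α*α*β*δ + (869373546:ℂ)*α*α*α*α*β*δ*δ + (18094722036:ℂ)*α*α*α*α*α + (869373546:ℂ)*α*α*α*α*α*β)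 * hD

set_option maxHeartbeats 4000000 in
set_option maxRecDepth 16384 in
lemma p3Fy : eval ![((16+4*α+4*β)/12), ((3*δ-6)/12), 1] (pderiv 1 F) = 0 := by
  simp [F, A1C, A2C, A3C, A4C, A5C, A6C, A7C, A8C, Qpoly, x, y, z, pderiv_mul, pderiv_pow, pderiv_C, pd00, pd01, pd02, pd10, pd11, pd12, pdn2, pdn3, pdn4, pdn5, pdn6, pdn7, pdn8, Derivation.map_sub, Derivation.map_neg]
  linear_combination ((39056671485568/3:ℂ) + (-3502752694640:ℂ)*δ + (-6858599726944/3:ℂ)*β + (8773754706728/3:ℂ)*β*δ + (-140546313732416/3:ℂ)*α + (24650042758312:ℂ)*α*δ + (-26990872852448/3:ℂ)*α*β + (12300737871496/3:ℂ)*α*β*δ + (-23575175016448:ℂ)*α*α + (9620341485192:ℂ)*α*α*δ + (-4427459029024:ℂ)*α*α*β + (5349375358840/3:ℂ)*α*α*β*δ + (-3835689313120:ℂ)*α*α*α + (3896354722984/3:ℂ)*α*α*α*δ + (-1044453473344/3:ℂ)*α*α*α*β + (285560840744/3:ℂ)*α*α*α*β*δ + (-354247279072/3:ℂ)*α*α*α*α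 + (74931982168/3:ℂ)*α*α*α*α*δ + (-4836480928:ℂ)*α*α*α*α*β + (2972489168/3:ℂ)*α*α*α*α*β*δ) * hA + ((-130425633032128/3:ℂ) + (-40645329720256/3:ℂ)*δ + (19716477318144:ℂ)*δ*δ + (-2217635120264/3:ℂ)*δ*δ*δ + (-1189394752320:ℂ)*δ*δ*δ*δ + (148674344040:ℂ)*δ*δ*δ*δ*δ + (28435519933568/3:ℂ)*β + (-26647206893968/3:ℂ)*β*δ + (23147284832/3:ℂ)*β*δ*δ + (2307016611064/3:ℂ)*β*δ*δ*δ + (-449682974080/3:ℂ)*β*δ*δ*δ*δ + (56210371760/3:ℂ)*β*δ*δ*δ*δ*δ + (11662590869728/3:ℂ)*β*β + (-4987726039160/3:ℂ)*β*β*δ + (-1274149307872/3:ℂ)*β*β*δ*δ + (494467822288/3:ℂ)*β*β*δ*δ*δ + (-24373485760/3:ℂ)*β*β*δ*δ*δ*δ + (3046685720/3:ℂ)*β*β*δ*δ*δ*δ*δ + (171620723456:ℂ)*β*β*β + (-13276397592:ℂ)*β*β*β*δ + (-11818459232:ℂ)*β*β*β*δ*δ + (9209151032/3:ℂ)*β*β*β*δ*δ*δ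 + (158984724982304/3:ℂ)*α + (-40093909767304:ℂ)*α*δ + (-211917829856/3:ℂ)*α*δ*δ + (9741562217416/3:ℂ)*α*δ*δ*δ + (-2043713212160/3:ℂ)*α*δ*δ*δ*δ + (255464151520/3:ℂ)*α*δ*δ*δ*δ*δ + (47780142585088/3:ℂ)*α*β + (-7294029231680:ℂ)*α*β*δ + (-4222876560256/3:ℂ)*α*β*δ*δ + (2148351120256/3:ℂ)*α*β*δ*δ*δ + (-182159780800/3:ℂ)*α*β*δ*δ*δ*δ + (22769972600/3:ℂ)*α*β*δ*δ*δ*δ*δ + (4888053035488/3:ℂ)*α*β*β + (-1369010301656/3:ℂ)*α*β*β*δ + (-150285624608:ℂ)*α*β*β*δ*δ + (156760503088/3:ℂ)*α*β*β*δ*δ*δ + (-1969747520:ℂ)*α*β*β*δ*δ*δ*δ + (246218440:ℂ)*α*β*β*δ*δ*δ*δ*δ + (41624548096:ℂ)*α*β*β*β + (-9659752712/3:ℂ)*α*β*β*β*δ + (-2866733408:ℂ)*α*β*β*β*δ*δ + (2233833848/3:ℂ)*α*β*β*β*δ*δ*δ + (33826967754592:ℂ)*α*α + (-14437390560576:ℂ)*α*α*δ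 + (-2916219502240:ℂ)*α*α*δ*δ + (4338924738208/3:ℂ)*α*α*δ*δ*δ + (-119624576640:ℂ)*α*α*δ*δ*δ*δ + (14953072080:ℂ)*α*α*δ*δ*δ*δ*δ + (4334970220416:ℂ)*α*α*β + (-1326223469728:ℂ)*α*α*β*δ + (-412771859936:ℂ)*α*α*β*δ*δ + (440605196120/3:ℂ)*α*α*β*δ*δ*δ + (-5909242560:ℂ)*α*α*β*δ*δ*δ*δ + (738655320:ℂ)*α*α*β*δ*δ*δ*δ*δ + (166498192384:ℂ)*α*α*β*β + (-38639010848/3:ℂ)*α*α*β*β*δ + (-11466933632:ℂ)*α*α*β*β*δ*δ + (8935335392/3:ℂ)*α*α*β*β*δ*δ*δ + (5153134565312:ℂ)*α*α*α + (-4168540108936/3:ℂ)*α*α*α*δ + (-469120091520:ℂ)*α*α*α*δ*δ + (161504416464:ℂ)*α*α*α*δ*δ*δ + (-5909242560:ℂ)*α*α*α*δ*δ*δ*δ + (738655320:ℂ)*α*α*α*δ*δ*δ*δ*δ + (249747288576:ℂ)*α*α*α*β + (-19319505424:ℂ)*α*α*α*β*δ + (-17200400448:ℂ)*α*α*α*β*δ*δ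 + (4467667696:ℂ)*α*α*α*β*δ*δ*δ + (166498192384:ℂ)*α*α*α*α + (-38639010848/3:ℂ)*α*α*α*α*δ + (-11466933632:ℂ)*α*α*α*α*δ*δ + (8935335392/3:ℂ)*α*α*α*α*δ*δ*δ) * hB + ((211695722290112:ℂ) + (32664433183504/3:ℂ)*δ + (-84992742673600/3:ℂ)*δ*δ + (10624092834200/3:ℂ)*δ*δ*δ + (40364573323488:ℂ)*β + (3877852553192:ℂ)*β*δ + (-18548900502400/3:ℂ)*β*δ*δ + (2318612562800/3:ℂ)*β*δ*δ*δ + (49996286079200/3:ℂ)*α + (67400779660928:ℂ)*α*δ + (-70744772117440/3:ℂ)*α*δ*δ + (8843096514680/3:ℂ)*α*δ*δ*δ + (12872803221056/3:ℂ)*α*β + (38421969518792/3:ℂ)*α*β*δ + (-13224880400960/3:ℂ)*α*β*δ*δ + (1653110050120/3:ℂ)*α*β*δ*δ*δ + (-255833691595072/3:ℂ)*α*α + (144895170132640/3:ℂ)*α*α*δ + (-21471491943040/3:ℂ)*α*α*δ*δ + (2683936492880/3:ℂ)*α*α*δ*δ*δ + (-56705398289408/3:ℂ)*α*α*β + (27262153234136/3:ℂ)*α*α*β*δ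 + (-3245891999360/3:ℂ)*α*α*β*δ*δ + (405736499920/3:ℂ)*α*α*β*δ*δ*δ + (-103667476147360/3:ℂ)*α*α*α + (38013976927432/3:ℂ)*α*α*α*δ + (-2781393029440/3:ℂ)*α*α*α*δ*δ + (347674128680/3:ℂ)*α*α*α*δ*δ*δ + (-17058161960864/3:ℂ)*α*α*α*β + (5623315301528/3:ℂ)*α*α*α*β*δ + (-298308273280/3:ℂ)*α*α*α*β*δ*δ + (37288534160/3:ℂ)*α*α*α*β*δ*δ*δ + (-13038860785312/3:ℂ)*α*α*α*α + (3777205763696/3:ℂ)*α*α*α*α*δ + (-126767051200/3:ℂ)*α*α*α*α*δ*δ + (15845881400/3:ℂ)*α*α*α*α*δ*δ*δ + (-1096779903712/3:ℂ)*α*α*α*α*β + (93452715872:ℂ)*α*α*α*α*β*δ + (-1969747520:ℂ)*α*α*α*α*β*δ*δ + (246218440:ℂ)*α*α*α*α*β*δ*δ*δ + (-354247279072/3:ℂ)*α*α*α*α*α + (74931982168/3:ℂ)*α*α*α*α*α*δ + (-4836480928:ℂ)*α*α*α*α*α*β + (2972489168/3:ℂ)*α*α*α*α*α*β*δ) * 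hD

set_option maxHeartbeats 4000000 in
set_option maxRecDepth 16384 in
lemma p3Qx : eval ![((16+4*α+4*β)/12), ((3*δ-6)/12), 1] (pderiv 0 Qpoly) = ((468:ℂ)*δ + (24:ℂ)*β*δ + (84:ℂ)*α*δ + (24:ℂ)*α*β*δ) := by
  simp [F, A1C, A2C, A3C, A4C, A5C, A6C, A7C, A8C, Qpoly, x, y, z, pderiv_mul, pderiv_pow, pderiv_C, pd00, pd01, pd02, pd10, pd11, pd12, pdn2, pdn3, pdn4, pdn5, pdn6, pdn7, pdn8, Derivation.map_sub, Derivation.map_neg]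
  linear_combination ((48:ℂ) + (-6:ℂ)*β) * hA + ((54:ℂ) + (6:ℂ)*α) * hB + ((-234:ℂ) + (-12:ℂ)*β + (-42:ℂ)*α + (-12:ℂ)*α*β) * hD

set_option maxHeartbeats 4000000 in
set_option maxRecDepth 16384 in
lemma p3Qy : eval ![((16+4*α+4*β)/12), ((3*δ-6)/12), 1] (pderiv 1 Qpoly) = ((-5920:ℂ) + (-1200:ℂ)*β + (-1568:ℂ)*α + (-176:ℂ)*α*β) := by
  simp [F, A1C, A2C, A3C, A4C, A5C, A6C, A7C, A8C, Qpoly, x, y, z, pderiv_mul, pderiv_pow, pderiv_C, pd00, pd01, pd02, pd10, pd11, pd12, pdn2, pdn3, pdn4, pdn5, pdn6, pdn7, pdn8, Derivation.map_sub, Derivation.map_neg]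
  linear_combination ((-136:ℂ)*δ + (-16:ℂ)*β*δ) * hA + ((-16:ℂ)*δ + (-16:ℂ)*α*δ) * hB + (0:ℂ) * hD

set_option maxHeartbeats 4000000 in
set_option maxRecDepth 16384 in
lemma p3Qxne : (((468:ℂ)*δ + (24:ℂ)*β*δ + (84:ℂ)*α*δ + (24:ℂ)*α*β*δ) : ℂ) ≠ 0 := by
  intro h
  have h1 : (((468:ℂ)*δ + (24:ℂ)*β*δ + (84:ℂ)*α*δ + (24:ℂ)*α*β*δ) : ℂ) * ((47/6912:ℂ)*δ + (11/3456:ℂ)*β*δ + (-7/6912:ℂ)*α*δ + (-1/1152:ℂ)*α*β*δ) = 1 := by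
    linear_combination ((-259/192:ℂ) + (-35/72:ℂ)*β + (-49/64:ℂ)*α + (-7/72:ℂ)*α*β + (-5/48:ℂ)*α*α) * hA + ((11/144:ℂ)*δ*δ + (1/18:ℂ)*α*δ*δ + (-1/48:ℂ)*α*α*δ*δ) * hB + ((919/192:ℂ) + (119/72:ℂ)*β + (79/48:ℂ)*α + (-47/192:ℂ)*α*α + (-7/72:ℂ)*α*α*β + (-5/48:ℂ)*α*α*α) * hD
  rw [h, zero_mul] at h1; exact zero_ne_one h1

set_option maxHeartbeats 4000000 in
set_option maxRecDepth 16384 in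
lemma p3Cne : (((-26164927/8:ℂ) + (-843332:ℂ)*δ + (-3040883/6:ℂ)*β + (-784621/6:ℂ)*β*δ + (-19037749/24:ℂ)*α + (-613612/3:ℂ)*α*δ + (-737531/6:ℂ)*α*β + (-190309/6:ℂ)*α*β*δ) : ℂ) ≠ 0 := by
  intro h
  have h1 : (((-26164927/8:ℂ) + (-843332:ℂ)*δ + (-3040883/6:ℂ)*β + (-784621/6:ℂ)*β*δ + (-19037749/24:ℂ)*α + (-613612/3:ℂ)*α*δ + (-737531/6:ℂ)*α*β + (-190309/6:ℂ)*α*β*δ) : ℂ) * ((-20715287/52199424:ℂ) + (-1408577/6524928:ℂ)*δ + (-5564179/13049856:ℂ)*β + (-108990653/208797696:ℂ)*β*δ + (5017087/52199424:ℂ)*α + (341401/6524928:ℂ)*α*δ + (449929/4349952:ℂ)*α*β + (8811751/69599232:ℂ)*α*β*δ) = 1 := by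
    linear_combination ((-85444930947257/104398848:ℂ) + (-190797801578665/417595392:ℂ)*δ + (-12091416962935/52199424:ℂ)*β + (-656789493485225/5011144704:ℂ)*β*δ + (-54077770119325/208797696:ℂ)*α + (-13114913559595/139198464:ℂ)*α*δ + (-4315133847595/156598272:ℂ)*α*β + (-8384777605295/417595392:ℂ)*α*α) * hA + ((16920017330057/78299136:ℂ) + (401280170925143/1252786176:ℂ)*δ + (85516355147513/1252786176:ℂ)*δ*δ + (-48208/4779:ℂ)*α + (-19273/4779:ℂ)*α*δ + (30217/152928:ℂ)*α*δ*δ + (-331836585299/26099712:ℂ)*α*α + (-2622982711919/139198464:ℂ)*α*α*δ + (-1676955521059/417595392:ℂ)*α*α*δ*δ) * hB + ((224879987260229/139198464:ℂ) + (73357275409115/156598272:ℂ)*β + (142541291838367/417595392:ℂ)*α + (-13228241796085/139198464:ℂ)*α*α + (-4315133847595/156598272:ℂ)*α*α*β + (-8384777605295/417595392:ℂ)*α*α*α) * hD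
  rw [h, zero_mul] at h1; exact zero_ne_one h1

set_option maxHeartbeats 4000000 in
set_option maxRecDepth 16384 in
lemma p3XX : eval ![((16+4*α+4*β)/12), ((3*δ-6)/12), 1] (pderiv 0 (pderiv 0 F)) = 2 * (((-26164927/8:ℂ) + (-843332:ℂ)*δ + (-3040883/6:ℂ)*β + (-784621/6:ℂ)*β*δ + (-19037749/24:ℂ)*α + (-613612/3:ℂ)*α*δ + (-737531/6:ℂ)*α*β + (-190309/6:ℂ)*α*β*δ)) * (((468:ℂ)*δ + (24:ℂ)*β*δ + (84:ℂ)*α*δ + (24:ℂ)*α*β*δ) : ℂ)^2 := by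
  simp [F, A1C, A2C, A3C, A4C, A5C, A6C, A7C, A8C, Qpoly, x, y, z, pderiv_mul, pderiv_pow, pderiv_C, pd00, pd01, pd02, pd10, pd11, pd12, pdn2, pdn3, pdn4, pdn5, pdn6, pdn7, pdn8, Derivation.map_sub, Derivation.map_neg]
  linear_combination ((47391762813108:ℂ) + (-18225738927408:ℂ)*δ + (9949661986572:ℂ)*β + (-6881698291032:ℂ)*β*δ + (36045962469900:ℂ)*α + (-15306170137728:ℂ)*α*δ + (7629346137360:ℂ)*α*β + (-1774349569608:ℂ)*α*β*δ + (7813424037360:ℂ)*α*α + (-691212177192:ℂ)*α*α*δ + (638335450176:ℂ)*α*α*β + (-41960472792:ℂ)*α*α*β*δ + (129449259144:ℂ)*α*α*α + (2457011520:ℂ)*α*α*α*δ + (8199996780:ℂ)*α*α*α*β + (182696640:ℂ)*α*α*α*β*δ) * hA + ((-63461475646380:ℂ) + (46667640538008:ℂ)*δ + (-2058630005412:ℂ)*δ*δ + (-4539351745872:ℂ)*δ*δ*δ + (927878926284:ℂ)*δ*δ*δ*δ + (-27420171480:ℂ)*δ*δ*δ*δ*δ + (2742017148:ℂ)*δ*δ*δ*δ*δ*δ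 + (-10468219189608:ℂ)*β + (1092665850768:ℂ)*β*δ + (825423073656:ℂ)*β*δ*δ + (-165614071344:ℂ)*β*δ*δ*δ + (28145413008:ℂ)*β*δ*δ*δ*δ + (-36328145706396:ℂ)*α + (13503897587448:ℂ)*α*δ + (1184825720268:ℂ)*α*δ*δ + (-1423629505584:ℂ)*α*δ*δ*δ + (281331015948:ℂ)*α*δ*δ*δ*δ + (-6647897880:ℂ)*α*δ*δ*δ*δ*δ + (664789788:ℂ)*α*δ*δ*δ*δ*δ*δ + (-2538923760936:ℂ)*α*β + (265013085456:ℂ)*α*β*δ + (201369663288:ℂ)*α*β*δ*δ + (-39871175472:ℂ)*α*β*δ*δ*δ + (6827177232:ℂ)*α*β*δ*δ*δ*δ + (-5077847521872:ℂ)*α*α + (530026170912:ℂ)*α*α*δ + (416316910464:ℂ)*α*α*δ*δ + (-76239906336:ℂ)*α*α*δ*δ*δ + (13654354464:ℂ)*α*α*δ*δ*δ*δ + (867061440:ℂ)*α*α*β*δ*δ + (223725888:ℂ)*α*α*β*δ*δ*δ + (1905053616:ℂ)*α*α*α*δ*δ + (491402304:ℂ)*α*α*α*δ*δ*δ + (141605952:ℂ)*α*α*α*β*δ*δ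 + (36539328:ℂ)*α*α*α*β*δ*δ*δ) * hB + ((56968781673732:ℂ) + (-76642759213416:ℂ)*δ + (18859558498056:ℂ)*δ*δ + (-1283228753400:ℂ)*δ*δ*δ + (128322875340:ℂ)*δ*δ*δ*δ + (-2620836611316:ℂ)*β + (-23410835204880:ℂ)*β*δ + (5352238469328:ℂ)*β*δ*δ + (-286531974000:ℂ)*β*δ*δ*δ + (28653197400:ℂ)*β*δ*δ*δ*δ + (65091864909612:ℂ)*α + (-73210705143000:ℂ)*α*δ + (15495179149596:ℂ)*α*δ*δ + (-625135858560:ℂ)*α*δ*δ*δ + (62513585856:ℂ)*α*δ*δ*δ*δ + (18820131630060:ℂ)*α*β + (-12473761673688:ℂ)*α*β*δ + (2590647937044:ℂ)*α*β*δ*δ + (-96906227400:ℂ)*α*β*δ*δ*δ + (9690622740:ℂ)*α*β*δ*δ*δ*δ + (39782264048904:ℂ)*α*α + (-16190171860248:ℂ)*α*α*δ + (3143207694348:ℂ)*α*α*δ*δ + (-76133953800:ℂ)*α*α*δ*δ*δ + (7613395380:ℂ)*α*α*δ*δ*δ*δ + (7042192621656:ℂ)*α*α*β + (-1828098717984:ℂ)*α*α*β*δ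 + (344374884144:ℂ)*α*α*β*δ*δ + (-6647897880:ℂ)*α*α*β*δ*δ*δ + (664789788:ℂ)*α*α*β*δ*δ*δ*δ + (7166177741640:ℂ)*α*α*α + (-703497234792:ℂ)*α*α*α*δ + (119923991064:ℂ)*α*α*α*δ*δ + (597335466276:ℂ)*α*α*α*β + (-42873955992:ℂ)*α*α*α*β*δ + (7491967020:ℂ)*α*α*α*β*δ*δ + (129449259144:ℂ)*α*α*α*α + (2457011520:ℂ)*α*α*α*α*δ + (8199996780:ℂ)*α*α*α*α*β + (182696640:ℂ)*α*α*α*α*β*δ) * hD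

set_option maxHeartbeats 4000000 in
set_option maxRecDepth 16384 in
lemma p3XY : eval ![((16+4*α+4*β)/12), ((3*δ-6)/12), 1] (pderiv 1 (pderiv 0 F)) = 2 * (((-26164927/8:ℂ) + (-843332:ℂ)*δ + (-3040883/6:ℂ)*β + (-784621/6:ℂ)*β*δ + (-19037749/24:ℂ)*α + (-613612/3:ℂ)*α*δ + (-737531/6:ℂ)*α*β + (-190309/6:ℂ)*α*β*δ)) * (((468:ℂ)*δ + (24:ℂ)*β*δ + (84:ℂ)*α*δ + (24:ℂ)*α*β*δ) : ℂ) * (((-5920:ℂ) + (-1200:ℂ)*β + (-1568:ℂ)*α + (-176:ℂ)*α*β) : ℂ) := by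
  simp [F, A1C, A2C, A3C, A4C, A5C, A6C, A7C, A8C, Qpoly, x, y, z, pderiv_mul, pderiv_pow, pderiv_C, pd00, pd01, pd02, pd10, pd11, pd12, pdn2, pdn3, pdn4, pdn5, pdn6, pdn7, pdn8, Derivation.map_sub, Derivation.map_neg]
  linear_combination ((-83535385652672:ℂ) + (56721289609616:ℂ)*δ + (-15874308278176:ℂ)*β + (8017701410816:ℂ)*β*δ + (-78207980429760:ℂ)*α + (35154119629680:ℂ)*α*δ + (-17258810199360:ℂ)*α*β + (8269331674680:ℂ)*α*β*δ + (-22520106548416:ℂ)*α*α + (8562619487808:ℂ)*α*α*δ + (-2524485378496:ℂ)*α*α*β + (749872177872:ℂ)*α*α*β*δ + (-1054844473408:ℂ)*α*α*α + (228125540512:ℂ)*α*α*α*δ + (-53468303936:ℂ)*α*α*α*β + (11151301352:ℂ)*α*α*α*β*δ) * hA + ((132304517191552:ℂ) + (-86387161074208:ℂ)*δ + (-8419539998912:ℂ)*δ*δ + (7807332720896:ℂ)*δ*δ*δ + (-1056567093120:ℂ)*δ*δ*δ*δ + (132070886640:ℂ)*δ*δ*δ*δ*δ + (38309169821568:ℂ)*β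 + (-15249305208520:ℂ)*β*δ + (-4058717151168:ℂ)*β*δ*δ + (1542815783472:ℂ)*β*δ*δ*δ + (-73120457280:ℂ)*β*δ*δ*δ*δ + (9140057160:ℂ)*β*δ*δ*δ*δ*δ + (2059448681472:ℂ)*β*β + (-159316771104:ℂ)*β*β*δ + (-141821510784:ℂ)*β*β*δ*δ + (36836604128:ℂ)*β*β*δ*δ*δ + (132289845740032:ℂ)*α + (-53800214703120:ℂ)*α*δ + (-11919168590528:ℂ)*α*δ*δ + (5400945660096:ℂ)*α*δ*δ*δ + (-402447974400:ℂ)*α*δ*δ*δ*δ + (50305996800:ℂ)*α*δ*δ*δ*δ*δ + (15469715462016:ℂ)*α*β + (-4209901139944:ℂ)*α*β*δ + (-1418510919232:ℂ)*α*β*δ*δ + (484690933072:ℂ)*α*β*δ*δ*δ + (-17727727680:ℂ)*α*β*δ*δ*δ*δ + (2215965960:ℂ)*α*β*δ*δ*δ*δ*δ + (499494577152:ℂ)*α*β*β + (-38639010848:ℂ)*α*β*β*δ + (-34400800896:ℂ)*α*β*β*δ*δ + (8935335392:ℂ)*α*β*β*δ*δ*δ + (30480783187584:ℂ)*α*α +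 (-8525566040432:ℂ)*α*α*δ + (-2841900480704:ℂ)*α*α*δ*δ + (961186425952:ℂ)*α*α*δ*δ*δ + (-35455455360:ℂ)*α*α*δ*δ*δ*δ + (4431931920:ℂ)*α*α*δ*δ*δ*δ*δ + (1498483731456:ℂ)*α*α*β + (-128317337056:ℂ)*α*α*β*δ + (-106402070528:ℂ)*α*α*β*δ*δ + (26806006176:ℂ)*α*α*β*δ*δ*δ + (1498483731456:ℂ)*α*α*α + (-135504461824:ℂ)*α*α*α*δ + (-108255412928:ℂ)*α*α*α*δ*δ + (26806006176:ℂ)*α*α*α*δ*δ*δ + (-1038443648:ℂ)*α*α*α*β*δ + (-267955072:ℂ)*α*α*α*β*δ*δ) * hB + ((-88572358545792:ℂ) + (130081695150336:ℂ)*δ + (-29733563913600:ℂ)*δ*δ + (3716695489200:ℂ)*δ*δ*δ + (14829172505568:ℂ)*β + (19375976852320:ℂ)*β*δ + (-6478284398400:ℂ)*β*δ*δ + (809785549800:ℂ)*β*δ*δ*δ + (-266521269932224:ℂ)*α + (146595526946928:ℂ)*α*δ + (-19337234221440:ℂ)*α*δ*δ + (2417154277680:ℂ)*α*δ*δ*δ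 + (-68134676357600:ℂ)*α*β + (32180412680128:ℂ)*α*β*δ + (-3464780645760:ℂ)*α*β*δ*δ + (433097580720:ℂ)*α*β*δ*δ*δ + (-156782617095168:ℂ)*α*α + (58447529514736:ℂ)*α*α*δ + (-4143489776640:ℂ)*α*α*δ*δ + (517936222080:ℂ)*α*α*δ*δ*δ + (-27854344453376:ℂ)*α*α*β + (9518196939808:ℂ)*α*α*β*δ + (-532351393920:ℂ)*α*α*β*δ*δ + (66543924240:ℂ)*α*α*β*δ*δ*δ + (-27960528260864:ℂ)*α*α*α + (8348777683616:ℂ)*α*α*α*δ + (-291662515200:ℂ)*α*α*α*δ*δ + (36457814400:ℂ)*α*α*α*δ*δ*δ + (-2756638435968:ℂ)*α*α*α*β + (737946900200:ℂ)*α*α*α*β*δ + (-17727727680:ℂ)*α*α*α*β*δ*δ + (2215965960:ℂ)*α*α*α*β*δ*δ*δ + (-1054844473408:ℂ)*α*α*α*α + (228125540512:ℂ)*α*α*α*α*δ + (-53468303936:ℂ)*α*α*α*α*β + (11151301352:ℂ)*α*α*α*α*β*δ) * hD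

set_option maxHeartbeats 4000000 in
set_option maxRecDepth 16384 in
lemma p3YY : eval ![((16+4*α+4*β)/12), ((3*δ-6)/12), 1] (pderiv 1 (pderiv 1 F)) = 2 * (((-26164927/8:ℂ) + (-843332:ℂ)*δ + (-3040883/6:ℂ)*β + (-784621/6:ℂ)*β*δ + (-19037749/24:ℂ)*α + (-613612/3:ℂ)*α*δ + (-737531/6:ℂ)*α*β + (-190309/6:ℂ)*α*β*δ)) * (((-5920:ℂ) + (-1200:ℂ)*β + (-1568:ℂ)*α + (-176:ℂ)*α*β) : ℂ)^2 := by
  simp [F, A1C, A2C, A3C, A4C, A5C, A6C, A7C, A8C, Qpoly, x, y, z, pderiv_mul, pderiv_pow, pderiv_C, pd00, pd01, pd02, pd10, pd11, pd12, pdn2, pdn3, pdn4, pdn5, pdn6, pdn7, pdn8, Derivation.map_sub, Derivation.map_neg]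
  linear_combination ((-108691211814080:ℂ) + (-193206541151104/3:ℂ)*δ + (-39901026467648/3:ℂ)*β + (-12800868249472:ℂ)*β*δ + (244384378563200/3:ℂ)*α + (-194174207004416/3:ℂ)*α*δ + (17189285156416:ℂ)*α*β + (-13684450685952:ℂ)*α*β*δ + (154652153815616/3:ℂ)*α*α + (-45600724999424/3:ℂ)*α*α*δ + (29663758923712/3:ℂ)*α*α*β + (-5284808573824/3:ℂ)*α*α*β*δ + (24900581894720/3:ℂ)*α*α*α + (-774918474496:ℂ)*α*α*α*δ + (726030888320:ℂ)*α*α*α*β + (-33763363200:ℂ)*α*α*α*β*δ + (708494558144/3:ℂ)*α*α*α*α + (9672961856:ℂ)*α*α*α*α*β) * hA + ((-15420425794880/3:ℂ) + (171944340159360:ℂ)*δ + (-20402638599168:ℂ)*δ*δ + (-14272737027840:ℂ)*δ*δ*δ + (2378789504640:ℂ)*δ*δ*δ*δ + (-142952167330304/3:ℂ)*β + (69067442616704/3:ℂ)*β*δ + (2382877671872:ℂ)*β*δ*δ + (-1798731896320:ℂ)*β*δ*δ*δ + (899365948160/3:ℂ)*β*δ*δ*δ*δ + (-10488309087552:ℂ)*β*β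 + (1008211910912/3:ℂ)*β*β*δ + (979424795968:ℂ)*β*β*δ*δ + (-97493943040:ℂ)*β*β*δ*δ*δ + (48746971520/3:ℂ)*β*β*δ*δ*δ*δ + (-1051823963648/3:ℂ)*β*β*β + (-41748931200:ℂ)*β*β*β*δ + (23636918464:ℂ)*β*β*β*δ*δ + (-211013937315712:ℂ)*α + (279203996615552/3:ℂ)*α*δ + (11041082351424:ℂ)*α*δ*δ + (-8174852848640:ℂ)*α*δ*δ*δ + (4087426424320/3:ℂ)*α*δ*δ*δ*δ + (-46608588780288:ℂ)*α*β + (18672958721792/3:ℂ)*α*β*δ + (3786769871104:ℂ)*α*β*δ*δ + (-728639123200:ℂ)*α*β*δ*δ*δ + (364319561600/3:ℂ)*α*β*δ*δ*δ*δ + (-3946228413248:ℂ)*α*β*β + (-85497706240:ℂ)*α*β*β*δ + (332087209536:ℂ)*α*β*β*δ*δ + (-23636970240:ℂ)*α*β*β*δ*δ*δ + (3939495040:ℂ)*α*β*β*δ*δ*δ*δ + (-255109451264/3:ℂ)*α*β*β*β + (-10126392960:ℂ)*α*β*β*β*δ + (5733466816:ℂ)*α*β*β*β*δ*δ + (-286129620299392/3:ℂ)*α*α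 + (12019631965184:ℂ)*α*α*δ + (7746432230720:ℂ)*α*α*δ*δ + (-1435494919680:ℂ)*α*α*δ*δ*δ + (239249153280:ℂ)*α*α*δ*δ*δ*δ + (-10573542656000:ℂ)*α*α*β + (-261170778752/3:ℂ)*α*α*β*δ + (920091600832:ℂ)*α*α*β*δ*δ + (-70910910720:ℂ)*α*α*β*δ*δ*δ + (11818485120:ℂ)*α*α*β*δ*δ*δ*δ + (-1020437805056/3:ℂ)*α*α*β*β + (-40505571840:ℂ)*α*α*β*β*δ + (22933867264:ℂ)*α*α*β*β*δ*δ + (-36586243578688/3:ℂ)*α*α*α + (-819937400576/3:ℂ)*α*α*α*δ + (1032788064000:ℂ)*α*α*α*δ*δ + (-70910910720:ℂ)*α*α*α*δ*δ*δ + (11818485120:ℂ)*α*α*α*δ*δ*δ*δ + (-1507810947328/3:ℂ)*α*α*α*β + (-176380061696/3:ℂ)*α*α*α*β*δ + (34400800896:ℂ)*α*α*α*β*δ*δ + (-1020437805056/3:ℂ)*α*α*α*α + (-40505571840:ℂ)*α*α*α*α*δ + (22933867264:ℂ)*α*α*α*α*δ*δ) * hB + ((89709549036928/3:ℂ) + (-339970970694400:ℂ)*δ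 + (169985485347200/3:ℂ)*δ*δ + (54594968097472/3:ℂ)*β + (-74195602009600:ℂ)*β*δ + (37097801004800/3:ℂ)*β*δ*δ + (343974593906880:ℂ)*α + (-282979088469760:ℂ)*α*δ + (141489544234880/3:ℂ)*α*δ*δ + (185852479973248/3:ℂ)*α*β + (-52899521603840:ℂ)*α*β*δ + (26449760801920/3:ℂ)*α*β*δ*δ + (285070418092928:ℂ)*α*α + (-85885967772160:ℂ)*α*α*δ + (42942983886080/3:ℂ)*α*α*δ*δ + (55115022856192:ℂ)*α*α*β + (-12983567997440:ℂ)*α*α*β*δ + (6491783998720/3:ℂ)*α*α*β*δ*δ + (83945746921920:ℂ)*α*α*α + (-11125572117760:ℂ)*α*α*α*δ + (5562786058880/3:ℂ)*α*α*α*δ*δ + (38889256294208/3:ℂ)*α*α*α*β + (-1193233093120:ℂ)*α*α*α*β*δ + (596616546560/3:ℂ)*α*α*α*β*δ*δ + (9368664796608:ℂ)*α*α*α*α + (-507068204800:ℂ)*α*α*α*α*δ + (253534102400/3:ℂ)*α*α*α*α*δ*δ + (2288107688384/3:ℂ)*α*α*α*α*β + (-23636970240:ℂ)*α*α*α*α*β*δ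 + (3939495040:ℂ)*α*α*α*α*β*δ*δ + (708494558144/3:ℂ)*α*α*α*α*α + (9672961856:ℂ)*α*α*α*α*α*β) * hD

lemma tacP3 : TacnodeTangentToQAt ((16+4*α+4*β)/12) ((3*δ-6)/12) := by
  refine ⟨p3F, p3Fx, p3Fy, fun h => p3Qxne (by rw [← p3Qx]; exact h.1), ((-26164927/8:ℂ) + (-843332:ℂ)*δ + (-3040883/6:ℂ)*β + (-784621/6:ℂ)*β*δ + (-19037749/24:ℂ)*α + (-613612/3:ℂ)*α*δ + (-737531/6:ℂ)*α*β + (-190309/6:ℂ)*α*β*δ), p3Cne, ?_, ?_, ?_⟩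
  · rw [p3Qx]; exact p3XX
  · rw [p3Qx, p3Qy]; exact p3XY
  · rw [p3Qy]; exact p3YY

/-- the octic `{F = 0}` has a double point at each of `p2, p3, p4, p5`
whose tangent cone is the doubled tangent line of the conic `{Q = 0}` there. -/
theorem werner_octic_tacnodes_tangent_to_conic :
    TacnodeTangentToQAt ((10+4*α+4*β)/6) ((3*δ)/6) ∧
    TacnodeTangentToQAt 1 0 ∧
    TacnodeTangentToQAt ((16+4*α+4*β)/12) ((3*δ+6)/12) ∧
    TacnodeTangentToQAt ((16+4*α+4*β)/12) ((3*δ-6)/12) := by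
  exact ⟨tacP0, tacP1, tacP2, tacP3⟩
end
end

section
/- The six points p, p1, p2, p3, p4, p5 do not lie on a conic: the only homogeneous polynomial of degree 2 in ℂ[x,y,z] vanishing at coordinate representatives of all six points p, p1, p2, p3, p4, p5 is the zero polynomial. -/
/-!
Write a conic as `A x² + B y² + C z² + D xy + E xz + F yz`. The points `[1:0:0]`, `[0:1:0]`,
`[1:0:1]` force `A = B = 0` and `E = -C`. Put `a = 10 + 4α + 4β` and `t = 3δ`, so that
`p2 = [a : t : 6]` and `p4, p5 = [a + 6 : t ± 6 : 12]`. Subtracting the equations at `p4` and `p5`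
gives `D (a + 6) + 12 F = 0`, adding them then gives `C (a - 6) = 0`, and `p2` gives
`t (D a + 6 F) = 0`. The radicals enter only through `a ≠ 6` and `t ≠ 0`, and these force
`C = D = F = 0`.
-/

noncomputable section

open MvPolynomial

namespace MvPolynomial

theorem IsHomogeneous.exists_eq_sum_smul_X_mul_X {σ R : Type*} [Fintype σ] [CommSemiring R]
    {G : MvPolynomial σ R} (hG : G.IsHomogeneous 2) :
    ∃ c : σ → σ → R, G = ∑ i, ∑ j, c i j • (X i * X j) := by
  have hspan :
      G ∈ Submodule.span R (Set.range fun p : σ × σ => (X p.1 * X p.2 : MvPolynomial σ R)) := by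
    have : G ∈ homogeneousSubmodule σ R 1 ^ 2 := by
      rwa [homogeneousSubmodule_one_pow]
    rw [homogeneousSubmodule_one_eq_span_X, pow_two, Submodule.span_mul_span] at this
    refine Submodule.span_mono ?_ this
    rintro _ ⟨_, ⟨i, rfl⟩, _, ⟨j, rfl⟩, rfl⟩
    exact ⟨(i, j), rfl⟩
  obtain ⟨c, hc⟩ := (Submodule.mem_span_range_iff_exists_fun R).1 hspan
  exact ⟨fun i j => c (i, j), by rw [← hc, Fintype.sum_prod_type]⟩

theorem IsHomogeneous.exists_eval_eq_ternary_quadratic {R : Type*} [CommSemiring R]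
    {G : MvPolynomial (Fin 3) R} (hG : G.IsHomogeneous 2) :
    ∃ A B C D E F : R, ∀ v : Fin 3 → R, eval v G =
      A * v 0 ^ 2 + B * v 1 ^ 2 + C * v 2 ^ 2 + D * v 0 * v 1 + E * v 0 * v 2 + F * v 1 * v 2 := by
  obtain ⟨c, rfl⟩ := hG.exists_eq_sum_smul_X_mul_X
  refine ⟨c 0 0, c 1 1, c 2 2, c 0 1 + c 1 0, c 0 2 + c 2 0, c 1 2 + c 2 1, fun v => ?_⟩
  simp only [Fin.sum_univ_three, map_add, smul_eval, eval_mul, eval_X]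
  ring

end MvPolynomial

theorem eq_zero_of_isHomogeneous_two_of_vanishes_at_six_points {K : Type*} [Field K] [CharZero K]
    {G : MvPolynomial (Fin 3) K} (hG : G.IsHomogeneous 2) {a t : K} (ha : a ≠ 6) (ht : t ≠ 0)
    (h : eval ![1, 0, 0] G = 0) (h1 : eval ![0, 1, 0] G = 0) (h2 : eval ![a, t, 6] G = 0)
    (h3 : eval ![1, 0, 1] G = 0) (h4 : eval ![a + 6, t + 6, 12] G = 0)
    (h5 : eval ![a + 6, t - 6, 12] G = 0) :
    G = 0 := by
  obtain ⟨A, B, C, D, E, F, hGv⟩ := hG.exists_eval_eq_ternary_quadratic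
  simp only [hGv, Matrix.cons_val_zero, Matrix.cons_val_one, Matrix.cons_val_two, Matrix.head_cons,
    Matrix.tail_cons] at h h1 h2 h3 h4 h5
  have hA : A = 0 := by linear_combination h
  have hB : B = 0 := by linear_combination h1
  have hE : E = -C := by linear_combination h3 - h
  have hDF : D * (a + 6) + 12 * F = 0 := by linear_combination (h4 - h5) / 12 - 2 * t * hB
  have hC : C = 0 := by
    refine (mul_eq_zero.1 ?_).resolve_left (sub_ne_zero.2 ha)
    linear_combination (-(h4 + h5) + 2 * (a + 6) ^ 2 * hA + (2 * t ^ 2 + 72) * hB + 2 * t * hDF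
      + 24 * (a + 6) * hE) / 24
  have hE0 : E = 0 := by rw [hE, hC, neg_zero]
  have hDaF : D * a + 6 * F = 0 := by
    refine (mul_eq_zero.1 ?_).resolve_left ht
    linear_combination h2 - a ^ 2 * hA - t ^ 2 * hB - 36 * hC - 6 * a * hE0
  have hD : D = 0 := by
    refine (mul_eq_zero.1 ?_).resolve_left (sub_ne_zero.2 ha)
    linear_combination 2 * hDaF - hDF
  have hF : F = 0 := by linear_combination (hDF - (a + 6) * hD) / 12
  refine MvPolynomial.funext fun v => ?_
  simp [hGv, hA, hB, hC, hD, hE0, hF]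

/-- the six points `p, p1, …, p5` do not lie on a conic: the only
homogeneous polynomial of degree 2 vanishing at all six is the zero polynomial. -/
theorem six_points_not_on_a_conic (G : MvPolynomial (Fin 3) ℂ)
    (hG : G.IsHomogeneous 2)
    (h : eval ptP G = 0) (h1 : eval ptP1 G = 0) (h2 : eval ptP2 G = 0)
    (h3 : eval ptP3 G = 0) (h4 : eval ptP4 G = 0) (h5 : eval ptP5 G = 0) :
    G = 0 := by
  have ha : 10 + 4 * α + 4 * β ≠ 6 := by
    intro hre
    have := congrArg Complex.re hre
    simp only [α, β, Complex.add_re, Complex.re_ofNat, Complex.mul_re, Complex.ofReal_re,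
      Complex.im_ofNat, Complex.ofReal_im, mul_zero, sub_zero] at this
    linarith [Real.sqrt_nonneg 17, Real.sqrt_nonneg (21 + 5 * √17)]
  have ht : 3 * δ ≠ 0 :=
    mul_ne_zero three_ne_zero (Complex.ofReal_ne_zero.2 (Real.sqrt_ne_zero'.2 (by positivity)))
  have hx : (16 + 4 * α + 4 * β : ℂ) = 10 + 4 * α + 4 * β + 6 := by ring
  rw [ptP4, hx] at h4
  rw [ptP5, hx] at h5
  exact eq_zero_of_isHomogeneous_two_of_vanishes_at_six_points hG ha ht h h1 h2 h3 h4 h5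
end
end

section
/- Substituting z = 0 into F gives the factorization F(x,y,0) = x³·y⁴·(A·x + B·y) in ℂ[x,y], where A = −(72389196288·αβ + 466877917440·α + 298344909312·β + 1925078503680) and B = (24·14182182144·αβ + 144·15251365120·α + 24·58496365824·β + 48·188641373952)·δ, and both A ≠ 0 and B ≠ 0. Consequently the line z = 0 meets the octic curve {F = 0} with multiplicity 4 at p = [1:0:0], with multiplicity 3 at p1 = [0:1:0], and with multiplicity 1 at the single further point [−B : A : 0], whose coordinates lie in the field ℚ(α,β,δ). -/
noncomputable section

open MvPolynomial

/-- `A = −(72389196288αβ + 466877917440α + 298344909312β + 1925078503680)`. -/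
def Acoef : ℂ :=
  -(72389196288*(α*β) + 466877917440*α + 298344909312*β + 1925078503680)

/-- `B = (24·14182182144·αβ + 144·15251365120·α + 24·58496365824·β + 48·188641373952)·δ`. -/
def Bcoef : ℂ :=
  (24*14182182144*(α*β) + 144*15251365120*α + 24*58496365824*β
    + 48*188641373952) * δ

/-!
On the line `z = 0` only the `z`-free monomials of the `Aᵢ` survive: `x³y⁴` in the `Aᵢ` that are
multiplied by `y`, and `x⁴y⁴` in the others. Hence `F(x,y,0) = x³y⁴(Ax + By)`, and the remaining
intersection point is the zero `[-B : A : 0]` of the linear factor. Since `α, β, δ` are positive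
reals, `A` and `B` are sums of terms of one sign, so neither vanishes.
-/

theorem eval_aeval_vecCons_zero {K : Type*} [CommRing K] (P : MvPolynomial (Fin 3) K) (a b : K) :
    eval ![a, b, 0] (aeval ![X 0, X 1, 0] P) = eval ![a, b, 0] P := by
  rw [aeval_eq_bind₁]
  change eval₂Hom _ _ (bind₁ _ P) = _
  rw [eval₂Hom_bind₁]
  congr
  funext i
  fin_cases i <;> simp

theorem aeval_restrict_x : aeval ![x, y, (0 : R3)] x = x := by simp [x]

theorem aeval_restrict_y : aeval ![x, y, (0 : R3)] y = y := by simp [y]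

theorem aeval_restrict_z : aeval ![x, y, (0 : R3)] z = 0 := by simp [z]

theorem aeval_F_restrict :
    aeval ![x, y, (0 : R3)] F = x ^ 3 * y ^ 4 * (C Acoef * x + C Bcoef * y) := by
  simp only [F, A1, A2, A3, A4, A5, A6, A7, A8, map_add, map_sub, map_mul, map_pow, map_neg,
    map_ofNat, aeval_C, algebraMap_eq, aeval_restrict_x, aeval_restrict_y, aeval_restrict_z]
  simp only [Acoef, Bcoef, C_add, C_mul, C_neg, map_ofNat]
  ring

theorem eval_F_neg_Bcoef_Acoef : eval ![-Bcoef, Acoef, 0] F = 0 :=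
  calc eval ![-Bcoef, Acoef, 0] F
      = eval ![-Bcoef, Acoef, 0] (x ^ 3 * y ^ 4 * (C Acoef * x + C Bcoef * y)) := by
        rw [← aeval_F_restrict]; exact (eval_aeval_vecCons_zero F _ _).symm
    _ = (-Bcoef) ^ 3 * Acoef ^ 4 * (Acoef * -Bcoef + Bcoef * Acoef) := by simp [x, y]
    _ = 0 := by ring

theorem Acoef_eq_neg_ofReal :
    Acoef = -((72389196288 * (√17 * √(21 + 5 * √17)) + 466877917440 * √17
      + 298344909312 * √(21 + 5 * √17) + 1925078503680 : ℝ) : ℂ) := by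
  simp only [Acoef, α, β]
  push_cast
  rfl

theorem Bcoef_eq_ofReal :
    Bcoef = (((24 * 14182182144 * (√17 * √(21 + 5 * √17)) + 144 * 15251365120 * √17
      + 24 * 58496365824 * √(21 + 5 * √17) + 48 * 188641373952) * √(5 + √17) : ℝ) : ℂ) := by
  simp only [Bcoef, α, β, δ]
  push_cast
  rfl

theorem Acoef_ne_zero : Acoef ≠ 0 := by
  rw [Acoef_eq_neg_ofReal, neg_ne_zero, Complex.ofReal_ne_zero]
  positivity

theorem Bcoef_ne_zero : Bcoef ≠ 0 := by
  rw [Bcoef_eq_ofReal, Complex.ofReal_ne_zero]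
  positivity

section IntermediateField

variable {K : IntermediateField ℚ ℂ}

theorem Acoef_mem (hα : α ∈ K) (hβ : β ∈ K) : Acoef ∈ K := by
  unfold Acoef
  apply_rules [neg_mem, add_mem, mul_mem, ofNat_mem]

theorem Bcoef_mem (hα : α ∈ K) (hβ : β ∈ K) (hδ : δ ∈ K) : Bcoef ∈ K := by
  unfold Bcoef
  apply_rules [add_mem, mul_mem, ofNat_mem]

end IntermediateField

/-- substituting `z = 0` into `F` gives `F(x,y,0) = x³·y⁴·(A·x + B·y)`
with `A ≠ 0` and `B ≠ 0`; hence the line `z = 0` meets the octic `{F = 0}` with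
multiplicity 4 at `p = [1:0:0]`, multiplicity 3 at `p1 = [0:1:0]`, and multiplicity 1
at the single further point `[−B : A : 0]`, whose coordinates lie in `ℚ(α,β,δ)`. -/
theorem werner_octic_restricted_to_line_z_eq_zero :
    (aeval ![x, y, (0 : R3)]) F = x^3 * y^4 * (C Acoef * x + C Bcoef * y) ∧
    Acoef ≠ 0 ∧ Bcoef ≠ 0 ∧
    eval ![-Bcoef, Acoef, 0] F = 0 ∧
    (-Bcoef) ∈ IntermediateField.adjoin ℚ ({α, β, δ} : Set ℂ) ∧
    Acoef ∈ IntermediateField.adjoin ℚ ({α, β, δ} : Set ℂ) := by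
  have hgen := IntermediateField.subset_adjoin ℚ ({α, β, δ} : Set ℂ)
  exact ⟨aeval_F_restrict, Acoef_ne_zero, Bcoef_ne_zero, eval_F_neg_Bcoef_Acoef,
    neg_mem (Bcoef_mem (hgen (by simp)) (hgen (by simp)) (hgen (by simp))),
    Acoef_mem (hgen (by simp)) (hgen (by simp))⟩
end
end
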